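/- arXiv:1709.03320 — 5 statements merged into one kernel-verified Lean document; each statement's English description precedes it below -/
import Mathlib

section
/- For the root system of type B_n with simple system Δ = {e_{i+1} − e_i : i ∈ [n−1]} ∪ {e_1}, the heights of positive roots are: ht(e_j − e_i) = j − i for i < j, ht(e_i) = i, and ht(e_i + e_j) = i + j for i < j. Consequently, for a signed permutation σ ∈ B_n, L_{Φ(Δ)}(σ) = oneg(σ) + oinv(σ) + onsp(σ). -/
open Finset

/-- The hyperoctahedral group `B_n` of signed permutations, encoded as a pair
consisting of the underlying permutation of positions and the signs of the entries. -/
abbrev BG (n : ℕ) := Equiv.Perm (Fin n) × (Fin n → Bool)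

/-- The window notation value `σ(i)` (1-based values, 0-based positions). -/
def wval {n : ℕ} (σ : BG n) (i : Fin n) : ℤ :=
  (if σ.2 i then -1 else 1) * ((σ.1 i : ℤ) + 1)

def pairsF (n : ℕ) : Finset (Fin n × Fin n) := univ.filter fun p => p.1 < p.2

/-- number of inversions -/
def invB {n : ℕ} (σ : BG n) : ℕ :=
  ((pairsF n).filter fun p => wval σ p.2 < wval σ p.1).card

/-- number of odd inversions -/
def oinvB {n : ℕ} (σ : BG n) : ℕ :=
  ((pairsF n).filter fun p => wval σ p.2 < wval σ p.1 ∧ (p.2.val - p.1.val) % 2 = 1).card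

/-- number of even inversions -/
def einvB {n : ℕ} (σ : BG n) : ℕ :=
  ((pairsF n).filter fun p => wval σ p.2 < wval σ p.1 ∧ (p.2.val - p.1.val) % 2 = 0).card

/-- number of negative sum pairs -/
def nspB {n : ℕ} (σ : BG n) : ℕ :=
  ((pairsF n).filter fun p => wval σ p.1 + wval σ p.2 < 0).card

/-- number of odd negative sum pairs -/
def onspB {n : ℕ} (σ : BG n) : ℕ :=
  ((pairsF n).filter fun p => wval σ p.1 + wval σ p.2 < 0 ∧ (p.2.val - p.1.val) % 2 = 1).card

/-- number of even negative sum pairs -/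
def enspB {n : ℕ} (σ : BG n) : ℕ :=
  ((pairsF n).filter fun p => wval σ p.1 + wval σ p.2 < 0 ∧ (p.2.val - p.1.val) % 2 = 0).card

/-- number of negative entries -/
def nnegB {n : ℕ} (σ : BG n) : ℕ :=
  (univ.filter fun i : Fin n => wval σ i < 0).card

/-- number of negative entries in odd (1-based) positions -/
def onegB {n : ℕ} (σ : BG n) : ℕ :=
  (univ.filter fun i : Fin n => wval σ i < 0 ∧ (i.val + 1) % 2 = 1).card

/-- number of negative entries in even (1-based) positions -/
def enegB {n : ℕ} (σ : BG n) : ℕ :=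
  (univ.filter fun i : Fin n => wval σ i < 0 ∧ (i.val + 1) % 2 = 0).card

/-- Coxeter length of type B -/
def lenB {n : ℕ} (σ : BG n) : ℕ := invB σ + nnegB σ + nspB σ

/-- Coxeter length of type D -/
def lenD {n : ℕ} (σ : BG n) : ℕ := invB σ + nspB σ

/-- the standard basis vector `e_i` of `ℝ^n` -/
def ee {n : ℕ} (i : Fin n) : Fin n → ℝ := fun j => if j = i then 1 else 0

/-- the action of a signed permutation on `ℝ^n`, with
`σ(e_i) = sign(σ(i)) e_{|σ(i)|}` -/
def actBG {n : ℕ} (σ : BG n) (v : Fin n → ℝ) : Fin n → ℝ :=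
  fun j => (if σ.2 (σ.1.symm j) then -1 else 1) * v (σ.1.symm j)

/-- the simple system of type `B_n`: `e_1` together with `e_{i+1} - e_i` -/
def deltaB (m : ℕ) : Fin (m + 1) → (Fin (m + 1) → ℝ) := fun k =>
  if k.val = 0 then ee 0
  else ee k - ee ⟨k.val - 1, Nat.lt_of_le_of_lt (Nat.sub_le _ _) k.isLt⟩

/-- positive roots of type `B` -/
def posB (n : ℕ) : Set (Fin n → ℝ) :=
  {v | (∃ i j : Fin n, i < j ∧ v = ee j - ee i) ∨ (∃ i : Fin n, v = ee i) ∨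
    (∃ i j : Fin n, i < j ∧ v = ee i + ee j)}

/-- negative roots of type `B` -/
def negB (n : ℕ) : Set (Fin n → ℝ) := {v | -v ∈ posB n}

/-- `v` has odd height with respect to the type `B` simple system -/
def OddHtB (m : ℕ) (v : Fin (m + 1) → ℝ) : Prop :=
  ∀ c : Fin (m + 1) → ℝ, v = ∑ k, c k • deltaB m k → ∃ t : ℤ, Odd t ∧ ∑ k, c k = (t : ℝ)

/-- the odd length: the number of positive roots of odd height sent to negative
roots -/
noncomputable def LB (m : ℕ) (σ : BG (m + 1)) : ℕ :=
  Set.ncard {v | v ∈ posB (m + 1) ∧ OddHtB m v ∧ actBG σ v ∈ negB (m + 1)}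

section Aux
variable {m : ℕ}

/-- height functional -/
def htF (m : ℕ) (v : Fin (m+1) → ℝ) : ℝ := ∑ l : Fin (m+1), ((l : ℕ) + 1 : ℝ) * v l

lemma htF_sum {ι : Type*} (s : Finset ι) (f : ι → Fin (m+1) → ℝ) :
    htF m (∑ k ∈ s, f k) = ∑ k ∈ s, htF m (f k) := by
  simp only [htF, Finset.sum_apply, Finset.mul_sum]
  exact Finset.sum_comm

lemma htF_smul (c : ℝ) (v : Fin (m+1) → ℝ) : htF m (c • v) = c * htF m v := by
  simp only [htF, Pi.smul_apply, smul_eq_mul, Finset.mul_sum]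
  exact Finset.sum_congr rfl fun x _ => by ring

lemma htF_ee (i : Fin (m+1)) : htF m (ee i) = (i : ℕ) + 1 := by
  simp [htF, ee]

lemma htF_sub (u v : Fin (m+1) → ℝ) : htF m (u - v) = htF m u - htF m v := by
  simp [htF, mul_sub, Finset.sum_sub_distrib]

lemma htF_add (u v : Fin (m+1) → ℝ) : htF m (u + v) = htF m u + htF m v := by
  simp [htF, mul_add, Finset.sum_add_distrib]

lemma htF_delta (k : Fin (m+1)) : htF m (deltaB m k) = 1 := by
  unfold deltaB
  split_ifs with h
  · rw [htF_ee]; norm_num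
  · rw [htF_sub, htF_ee, htF_ee]
    have : 1 ≤ k.val := Nat.one_le_iff_ne_zero.mpr h
    push_cast [Nat.cast_sub this]
    ring

lemma sum_coeffs (v : Fin (m+1) → ℝ) (c : Fin (m+1) → ℝ)
    (h : v = ∑ k, c k • deltaB m k) : ∑ k, c k = htF m v := by
  rw [h, htF_sum]
  simp [htF_smul, htF_delta]

end Aux
section Aux2
variable {m : ℕ}

lemma delta_zero : deltaB m 0 = ee 0 := by simp [deltaB]

lemma delta_succ (i : Fin m) : deltaB m i.succ = ee i.succ - ee i.castSucc := by
  have h : (i.succ : Fin (m+1)).val ≠ 0 := by simp [Fin.val_succ]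
  simp only [deltaB, if_neg h]
  have : (⟨(i.succ : Fin (m+1)).val - 1, Nat.lt_of_le_of_lt (Nat.sub_le _ _) (i.succ : Fin (m+1)).isLt⟩ : Fin (m+1)) = i.castSucc := by
    simp [Fin.ext_iff, Fin.val_succ]
  rw [this]

lemma ee_expr (i : Fin (m+1)) :
    ee i = ∑ k, (if k ≤ i then (1:ℝ) else 0) • deltaB m k := by
  induction i using Fin.induction with
  | zero =>
    have : ∀ k : Fin (m+1), (if k ≤ (0 : Fin (m+1)) then (1:ℝ) else 0) • deltaB m k
        = if k = 0 then deltaB m k else 0 := by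
      intro k
      by_cases h : k = 0 <;> simp [h, Fin.le_zero_iff]
    rw [Finset.sum_congr rfl fun k _ => this k, Finset.sum_ite_eq' _ _ (fun k => deltaB m k)]
    simp only [Finset.mem_univ, if_pos, delta_zero]
  | succ i ih =>
    have split : ∀ k : Fin (m+1),
        (if k ≤ i.succ then (1:ℝ) else 0) • deltaB m k
        = (if k ≤ i.castSucc then (1:ℝ) else 0) • deltaB m k
          + (if k = i.succ then (1:ℝ) else 0) • deltaB m k := by
      intro k
      have h1 : k ≤ i.succ ↔ (k ≤ i.castSucc ∨ k = i.succ) := by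
        rw [Fin.le_def, Fin.le_def, Fin.ext_iff]
        simp [Fin.val_succ]
        omega
      have hns : ¬ (i.succ ≤ i.castSucc) := by
        rw [Fin.le_def]; simp [Fin.val_succ]
      by_cases h2 : k = i.succ
      · subst h2; simp [hns, h1]
      · by_cases h3 : k ≤ i.castSucc <;> simp [h1, h2, h3]
    rw [Finset.sum_congr rfl fun k _ => split k, Finset.sum_add_distrib, ← ih]
    have : ∀ k : Fin (m+1), (if k = i.succ then (1:ℝ) else 0) • deltaB m k
        = if k = i.succ then deltaB m k else 0 := by
      intro k; by_cases h : k = i.succ <;> simp [h]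
    rw [Finset.sum_congr rfl fun k _ => this k, Finset.sum_ite_eq' _ _ (fun k => deltaB m k)]
    rw [if_pos (Finset.mem_univ _), delta_succ]
    abel

end Aux2
section Aux3
variable {m : ℕ}

lemma expr_sub (i j : Fin (m+1)) :
    ∃ c : Fin (m+1) → ℝ, ee j - ee i = ∑ k, c k • deltaB m k := by
  refine ⟨fun k => (if k ≤ j then (1:ℝ) else 0) - (if k ≤ i then (1:ℝ) else 0), ?_⟩
  rw [ee_expr j, ee_expr i, ← Finset.sum_sub_distrib]
  exact Finset.sum_congr rfl fun k _ => (sub_smul _ _ _).symm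

lemma expr_add (i j : Fin (m+1)) :
    ∃ c : Fin (m+1) → ℝ, ee i + ee j = ∑ k, c k • deltaB m k := by
  refine ⟨fun k => (if k ≤ i then (1:ℝ) else 0) + (if k ≤ j then (1:ℝ) else 0), ?_⟩
  rw [ee_expr i, ee_expr j, ← Finset.sum_add_distrib]
  exact Finset.sum_congr rfl fun k _ => (add_smul _ _ _).symm

lemma oddht_iff (v : Fin (m+1) → ℝ) (H : ℤ)
    (hex : ∃ c : Fin (m+1) → ℝ, v = ∑ k, c k • deltaB m k)
    (hh : htF m v = (H : ℝ)) : OddHtB m v ↔ Odd H := by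
  constructor
  · intro ho
    obtain ⟨c, hc⟩ := hex
    obtain ⟨t, ht, hs⟩ := ho c hc
    rw [sum_coeffs v c hc, hh] at hs
    have : H = t := by exact_mod_cast hs
    rwa [this]
  · intro ho c hc
    exact ⟨H, ho, by rw [sum_coeffs v c hc, hh]⟩

lemma htF_sub_ee (i j : Fin (m+1)) : htF m (ee j - ee i) = ((j:ℕ) : ℝ) - ((i:ℕ) : ℝ) := by
  rw [htF_sub, htF_ee, htF_ee]; ring

lemma htF_add_ee (i j : Fin (m+1)) : htF m (ee i + ee j) = ((i:ℕ) : ℝ) + ((j:ℕ) : ℝ) + 2 := by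
  rw [htF_add, htF_ee, htF_ee]; ring

lemma part1 (i j : Fin (m+1)) (hij : i < j) (c : Fin (m+1) → ℝ)
    (h : ee j - ee i = ∑ k, c k • deltaB m k) :
    ∑ k, c k = (((j : ℕ) - (i : ℕ) : ℕ) : ℝ) := by
  rw [sum_coeffs _ _ h, htF_sub_ee, Nat.cast_sub (le_of_lt hij)]

lemma part2 (i : Fin (m+1)) (c : Fin (m+1) → ℝ)
    (h : ee i = ∑ k, c k • deltaB m k) :
    ∑ k, c k = (((i : ℕ) + 1 : ℕ) : ℝ) := by
  rw [sum_coeffs _ _ h, htF_ee]; push_cast; ring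

lemma part3 (i j : Fin (m+1)) (hij : i < j) (c : Fin (m+1) → ℝ)
    (h : ee i + ee j = ∑ k, c k • deltaB m k) :
    ∑ k, c k = (((i : ℕ) + (j : ℕ) + 2 : ℕ) : ℝ) := by
  rw [sum_coeffs _ _ h, htF_add_ee]; push_cast; ring

lemma oddht_sub (i j : Fin (m+1)) :
    OddHtB m (ee j - ee i) ↔ Odd ((j:ℤ) - (i:ℤ)) := by
  apply oddht_iff _ _ (expr_sub i j)
  rw [htF_sub_ee]; push_cast; ring

lemma oddht_ee (i : Fin (m+1)) : OddHtB m (ee i) ↔ Odd ((i:ℤ) + 1) := by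
  apply oddht_iff _ _ ⟨_, ee_expr i⟩
  rw [htF_ee]; push_cast; ring

lemma oddht_add (i j : Fin (m+1)) :
    OddHtB m (ee i + ee j) ↔ Odd ((i:ℤ) + (j:ℤ) + 2) := by
  apply oddht_iff _ _ (expr_add i j)
  rw [htF_add_ee]; push_cast; ring

end Aux3
section Aux4
variable {n : ℕ}

lemma last_one (u : Fin n → ℝ) (hu : u ∈ posB n) (q : Fin n)
    (hq : u q ≠ 0) (hlast : ∀ r, q < r → u r = 0) : u q = 1 := by
  rcases hu with ⟨i,j,hij,rfl⟩|⟨i,rfl⟩|⟨i,j,hij,rfl⟩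
  · have hne : i ≠ j := ne_of_lt hij
    have hj : (ee j - ee i) j = 1 := by simp [ee, Ne.symm hne]
    have hqj : j ≤ q := by
      by_contra h
      push_neg at h
      rw [hlast j h] at hj
      norm_num at hj
    rcases eq_or_ne q j with rfl | hqjne
    · exact hj
    · exfalso
      apply hq
      have hqi : q ≠ i := by
        intro h
        rw [h] at hqj
        exact absurd hij (not_lt.mpr hqj)
      simp [ee, hqjne, hqi]
  · have hj : (ee i) i = 1 := by simp [ee]
    have hqj : i ≤ q := by
      by_contra h
      push_neg at h
      rw [hlast i h] at hj
      norm_num at hj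
    rcases eq_or_ne q i with rfl | hqne
    · exact hj
    · exfalso; apply hq; simp [ee, hqne]
  · have hne : i ≠ j := ne_of_lt hij
    have hj : (ee i + ee j) j = 1 := by simp [ee, Ne.symm hne]
    have hqj : j ≤ q := by
      by_contra h
      push_neg at h
      rw [hlast j h] at hj
      norm_num at hj
    rcases eq_or_ne q j with rfl | hqjne
    · exact hj
    · exfalso
      apply hq
      have hqi : q ≠ i := by
        intro h
        rw [h] at hqj
        exact absurd (lt_of_lt_of_le hij hqj) (lt_irrefl _)
      simp [ee, hqjne, hqi]

lemma pair_mem_negB (a b : Fin n) (hab : a < b) (s t : ℝ)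
    (hs : s = 1 ∨ s = -1) (ht : t = 1 ∨ t = -1) :
    (s • ee a + t • ee b ∈ negB n) ↔ t = -1 := by
  have hne : a ≠ b := ne_of_lt hab
  constructor
  · intro h
    have h1 : (-(s • ee a + t • ee b)) b = 1 := by
      apply last_one _ h
      · simp [ee, Ne.symm hne]
        rcases ht with h|h <;> rw [h] <;> norm_num
      · intro r hr
        have hra : r ≠ a := fun hh => absurd (hab.trans hr) (by rw [hh]; exact lt_irrefl _)
        have hrb : r ≠ b := ne_of_gt hr
        simp [ee, hra, hrb]
    simp [ee, Ne.symm hne] at h1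
    linarith
  · intro h
    subst h
    rcases hs with h|h <;> subst h
    · exact Or.inl ⟨a, b, hab, by funext x; simp [ee]; ring⟩
    · exact Or.inr (Or.inr ⟨a, b, hab, by funext x; simp [ee]; ring⟩)

lemma single_mem_negB (p : Fin n) (s : ℝ) (hs : s = 1 ∨ s = -1) :
    (s • ee p ∈ negB n) ↔ s = -1 := by
  constructor
  · intro h
    have h1 : (-(s • ee p)) p = 1 := by
      apply last_one _ h
      · simp [ee]
        rcases hs with h|h <;> rw [h] <;> norm_num
      · intro r hr
        simp [ee, ne_of_gt hr]
    simp [ee] at h1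
    linarith
  · intro h
    subst h
    exact Or.inr (Or.inl ⟨p, by funext x; simp [ee]⟩)

end Aux4
section Aux5
variable {n : ℕ}

/-- sign of the i-th entry -/
def sgn (σ : BG n) (i : Fin n) : ℝ := if σ.2 i then -1 else 1

lemma sgn_cases (σ : BG n) (i : Fin n) : sgn σ i = 1 ∨ sgn σ i = -1 := by
  unfold sgn; split_ifs <;> simp

lemma neg_sgn_cases (σ : BG n) (i : Fin n) : -sgn σ i = 1 ∨ -sgn σ i = -1 := by
  rcases sgn_cases σ i with h|h <;> rw [h] <;> simp

lemma sgn_neg_iff (σ : BG n) (i : Fin n) : sgn σ i = -1 ↔ σ.2 i = true := by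
  unfold sgn; split_ifs with h <;> simp [h] <;> norm_num

lemma neg_sgn_neg_iff (σ : BG n) (i : Fin n) : -sgn σ i = -1 ↔ σ.2 i = false := by
  unfold sgn; split_ifs with h <;> simp [h] <;> norm_num

lemma actBG_ee (σ : BG n) (i : Fin n) :
    actBG σ (ee i) = sgn σ i • ee (σ.1 i) := by
  funext j
  simp only [actBG, ee, sgn, Pi.smul_apply, smul_eq_mul]
  by_cases h : j = σ.1 i
  · have h2 : σ.1.symm j = i := by rw [h, Equiv.symm_apply_apply]
    simp [h, h2]
  · have h2 : σ.1.symm j ≠ i := by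
      intro hh
      exact h (by rw [← hh, Equiv.apply_symm_apply])
    simp [h, h2]

lemma actBG_sub (σ : BG n) (u v : Fin n → ℝ) :
    actBG σ (u - v) = actBG σ u - actBG σ v := by
  funext j; simp [actBG, mul_sub]

lemma actBG_add (σ : BG n) (u v : Fin n → ℝ) :
    actBG σ (u + v) = actBG σ u + actBG σ v := by
  funext j; simp [actBG, mul_add]

lemma wval_lt_iff (σ : BG n) (i j : Fin n) (h : σ.1 i < σ.1 j) :
    wval σ j < wval σ i ↔ σ.2 j = true := by
  have hlt : ((σ.1 i : ℕ) : ℤ) < ((σ.1 j : ℕ) : ℤ) := by exact_mod_cast h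
  rcases Bool.eq_false_or_eq_true (σ.2 i) with hi|hi <;>
    rcases Bool.eq_false_or_eq_true (σ.2 j) with hj|hj <;>
    simp [wval, hi, hj] <;> omega

lemma wval_gt_iff (σ : BG n) (i j : Fin n) (h : σ.1 j < σ.1 i) :
    wval σ j < wval σ i ↔ σ.2 i = false := by
  have hlt : ((σ.1 j : ℕ) : ℤ) < ((σ.1 i : ℕ) : ℤ) := by exact_mod_cast h
  rcases Bool.eq_false_or_eq_true (σ.2 i) with hi|hi <;>
    rcases Bool.eq_false_or_eq_true (σ.2 j) with hj|hj <;>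
    simp [wval, hi, hj] <;> omega

lemma wval_neg_iff (σ : BG n) (i : Fin n) : wval σ i < 0 ↔ σ.2 i = true := by
  have : (0:ℤ) ≤ ((σ.1 i : ℕ) : ℤ) := Int.ofNat_nonneg _
  rcases Bool.eq_false_or_eq_true (σ.2 i) with hi|hi <;> simp [wval, hi] <;> omega

lemma wval_sum_iff (σ : BG n) (i j : Fin n) (h : σ.1 i < σ.1 j) :
    wval σ i + wval σ j < 0 ↔ σ.2 j = true := by
  have hlt : ((σ.1 i : ℕ) : ℤ) < ((σ.1 j : ℕ) : ℤ) := by exact_mod_cast h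
  rcases Bool.eq_false_or_eq_true (σ.2 i) with hi|hi <;>
    rcases Bool.eq_false_or_eq_true (σ.2 j) with hj|hj <;>
    simp [wval, hi, hj] <;> omega

lemma wval_sum_iff' (σ : BG n) (i j : Fin n) (h : σ.1 j < σ.1 i) :
    wval σ i + wval σ j < 0 ↔ σ.2 i = true := by
  have hlt : ((σ.1 j : ℕ) : ℤ) < ((σ.1 i : ℕ) : ℤ) := by exact_mod_cast h
  rcases Bool.eq_false_or_eq_true (σ.2 i) with hi|hi <;>
    rcases Bool.eq_false_or_eq_true (σ.2 j) with hj|hj <;>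
    simp [wval, hi, hj] <;> omega

lemma equivA (σ : BG n) (i j : Fin n) (hij : i ≠ j) :
    actBG σ (ee j - ee i) ∈ negB n ↔ wval σ j < wval σ i := by
  have hb : σ.1 i ≠ σ.1 j := fun h => hij (σ.1.injective h)
  rw [actBG_sub, actBG_ee, actBG_ee]
  rcases lt_or_gt_of_ne hb with h | h
  · have hrw : sgn σ j • ee (σ.1 j) - sgn σ i • ee (σ.1 i)
        = (-sgn σ i) • ee (σ.1 i) + sgn σ j • ee (σ.1 j) := by
      rw [neg_smul]; abel
    rw [hrw, pair_mem_negB _ _ h _ _ (neg_sgn_cases σ i) (sgn_cases σ j),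
      sgn_neg_iff, wval_lt_iff σ i j h]
  · have hrw : sgn σ j • ee (σ.1 j) - sgn σ i • ee (σ.1 i)
        = sgn σ j • ee (σ.1 j) + (-sgn σ i) • ee (σ.1 i) := by
      rw [neg_smul]; abel
    rw [hrw, pair_mem_negB _ _ h _ _ (sgn_cases σ j) (neg_sgn_cases σ i),
      neg_sgn_neg_iff, wval_gt_iff σ i j h]

lemma equivB (σ : BG n) (i : Fin n) :
    actBG σ (ee i) ∈ negB n ↔ wval σ i < 0 := by
  rw [actBG_ee, single_mem_negB _ _ (sgn_cases σ i), sgn_neg_iff, wval_neg_iff]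

lemma equivC (σ : BG n) (i j : Fin n) (hij : i ≠ j) :
    actBG σ (ee i + ee j) ∈ negB n ↔ wval σ i + wval σ j < 0 := by
  have hb : σ.1 i ≠ σ.1 j := fun h => hij (σ.1.injective h)
  rw [actBG_add, actBG_ee, actBG_ee]
  rcases lt_or_gt_of_ne hb with h | h
  · rw [pair_mem_negB _ _ h _ _ (sgn_cases σ i) (sgn_cases σ j),
      sgn_neg_iff, wval_sum_iff σ i j h]
  · have hrw : sgn σ i • ee (σ.1 i) + sgn σ j • ee (σ.1 j)
        = sgn σ j • ee (σ.1 j) + sgn σ i • ee (σ.1 i) := by abel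
    rw [hrw, pair_mem_negB _ _ h _ _ (sgn_cases σ j) (sgn_cases σ i),
      sgn_neg_iff, wval_sum_iff' σ i j h]

end Aux5
section Aux6
variable {n : ℕ}

/-- sum of entries -/
def esum (v : Fin n → ℝ) : ℝ := ∑ l, v l

lemma esum_ee (i : Fin n) : esum (ee i) = 1 := by simp [esum, ee]

lemma esum_sub (i j : Fin n) : esum (ee j - ee i) = 0 := by
  simp [esum, ee, Finset.sum_sub_distrib]

lemma esum_add (i j : Fin n) : esum (ee i + ee j) = 2 := by
  simp [esum, ee, Finset.sum_add_distrib]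
  norm_num

lemma ee_injF {i i' : Fin n} (h : (ee i : Fin n → ℝ) = ee i') : i = i' := by
  have hh := congrFun h i'
  simp only [ee, if_pos rfl] at hh
  split_ifs at hh with a
  · exact a.symm
  · norm_num at hh

lemma sub_injF {i j i' j' : Fin n} (h1 : i < j) (h2 : i' < j')
    (h : (ee j - ee i : Fin n → ℝ) = ee j' - ee i') : i = i' ∧ j = j' := by
  have hne' : j' ≠ i' := (ne_of_lt h2).symm
  have hne : j ≠ i := (ne_of_lt h1).symm
  have hjj : j' = j := by
    have hh := congrFun h j'
    simp only [Pi.sub_apply, ee, if_pos rfl, if_neg hne'] at hh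
    split_ifs at hh with a b c <;> first | exact a | norm_num at hh
  have hii : i' = i := by
    have hh := congrFun h i'
    simp only [Pi.sub_apply, ee, if_pos rfl, if_neg (ne_of_lt h2)] at hh
    split_ifs at hh with a b c <;> first | assumption | norm_num at hh
  exact ⟨hii.symm, hjj.symm⟩

lemma add_injF {i j i' j' : Fin n} (h1 : i < j) (h2 : i' < j')
    (h : (ee i + ee j : Fin n → ℝ) = ee i' + ee j') : i = i' ∧ j = j' := by
  have hne' : j' ≠ i' := (ne_of_lt h2).symm
  have hne : j ≠ i := (ne_of_lt h1).symm
  have key : ∀ x, (if x = i then (1:ℝ) else 0) + (if x = j then 1 else 0)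
      = (if x = i' then 1 else 0) + (if x = j' then 1 else 0) :=
    fun x => by simpa [ee] using congrFun h x
  have hjj : j = j' := by
    by_contra hc
    have hji' : j = i' := by
      by_contra a
      have k1 := key j
      simp [hne, a, hc] at k1
    have hj'i : j' = i := by
      by_contra a
      have k2 := key j'
      simp [hne', a, Ne.symm hc] at k2
    rw [← hji', hj'i] at h2
    exact absurd h1 (lt_asymm h2)
  subst hjj
  refine ⟨?_, rfl⟩
  have hi'j : i' ≠ j := Ne.symm hne'
  have : i' = i := by
    by_contra a
    have k4 := key i'
    simp [a, hi'j] at k4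
  exact this.symm

end Aux6
lemma part4 (m : ℕ) (σ : BG (m+1)) :
    LB m σ = onegB σ + oinvB σ + onspB σ := by
  classical
  set A := ((pairsF (m+1)).filter fun p => wval σ p.2 < wval σ p.1 ∧ (p.2.val - p.1.val) % 2 = 1) with hA
  set Bs := (univ.filter fun i : Fin (m+1) => wval σ i < 0 ∧ (i.val + 1) % 2 = 1) with hB
  set C := ((pairsF (m+1)).filter fun p => wval σ p.1 + wval σ p.2 < 0 ∧ (p.2.val - p.1.val) % 2 = 1) with hC
  set f1 : Fin (m+1) × Fin (m+1) → (Fin (m+1) → ℝ) := fun p => ee p.2 - ee p.1 with hf1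
  set f2 : Fin (m+1) → (Fin (m+1) → ℝ) := fun i => ee i with hf2
  set f3 : Fin (m+1) × Fin (m+1) → (Fin (m+1) → ℝ) := fun p => ee p.1 + ee p.2 with hf3
  set T := (A.image f1 ∪ Bs.image f2) ∪ C.image f3 with hT
  have memA : ∀ p : Fin (m+1) × Fin (m+1), p ∈ A ↔
      p.1 < p.2 ∧ wval σ p.2 < wval σ p.1 ∧ (p.2.val - p.1.val) % 2 = 1 := by
    intro p; simp [hA, pairsF, Finset.mem_filter, and_assoc]
  have memB : ∀ i : Fin (m+1), i ∈ Bs ↔ wval σ i < 0 ∧ (i.val + 1) % 2 = 1 := by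
    intro i; simp [hB]
  have memC : ∀ p : Fin (m+1) × Fin (m+1), p ∈ C ↔
      p.1 < p.2 ∧ wval σ p.1 + wval σ p.2 < 0 ∧ (p.2.val - p.1.val) % 2 = 1 := by
    intro p; simp [hC, pairsF, Finset.mem_filter, and_assoc]
  have hset : {v | v ∈ posB (m+1) ∧ OddHtB m v ∧ actBG σ v ∈ negB (m+1)} = ↑T := by
    ext v
    simp only [Set.mem_setOf_eq, hT, Finset.coe_union, Set.mem_union, Finset.mem_coe,
      Finset.mem_image]
    constructor
    · rintro ⟨hpos, hodd, hneg⟩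
      rcases hpos with ⟨i,j,hij,rfl⟩|⟨i,rfl⟩|⟨i,j,hij,rfl⟩
      · left; left
        refine ⟨(i,j), ?_, rfl⟩
        rw [memA]
        refine ⟨hij, (equivA σ i j (ne_of_lt hij)).mp hneg, ?_⟩
        have ho := (oddht_sub i j).mp hodd
        rw [Int.odd_iff] at ho
        have hlt : i.val < j.val := hij
        dsimp only
        omega
      · left; right
        refine ⟨i, ?_, rfl⟩
        rw [memB]
        refine ⟨(equivB σ i).mp hneg, ?_⟩
        have ho := (oddht_ee i).mp hodd
        rw [Int.odd_iff] at ho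
        omega
      · right
        refine ⟨(i,j), ?_, rfl⟩
        rw [memC]
        refine ⟨hij, (equivC σ i j (ne_of_lt hij)).mp hneg, ?_⟩
        have ho := (oddht_add i j).mp hodd
        rw [Int.odd_iff] at ho
        have hlt : i.val < j.val := hij
        dsimp only
        omega
    · rintro ((⟨p, hp, rfl⟩|⟨i, hi, rfl⟩)|⟨p, hp, rfl⟩)
      · rw [memA] at hp
        obtain ⟨h1, h2, h3⟩ := hp
        have hlt : p.1.val < p.2.val := h1
        refine ⟨Or.inl ⟨p.1, p.2, h1, rfl⟩, ?_, (equivA σ p.1 p.2 (ne_of_lt h1)).mpr h2⟩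
        rw [hf1]
        rw [oddht_sub, Int.odd_iff]
        omega
      · rw [memB] at hi
        obtain ⟨h1, h2⟩ := hi
        refine ⟨Or.inr (Or.inl ⟨i, rfl⟩), ?_, (equivB σ i).mpr h1⟩
        rw [hf2, oddht_ee, Int.odd_iff]
        omega
      · rw [memC] at hp
        obtain ⟨h1, h2, h3⟩ := hp
        have hlt : p.1.val < p.2.val := h1
        refine ⟨Or.inr (Or.inr ⟨p.1, p.2, h1, rfl⟩), ?_, (equivC σ p.1 p.2 (ne_of_lt h1)).mpr h2⟩
        rw [hf3, oddht_add, Int.odd_iff]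
        omega
  rw [LB, hset, Set.ncard_coe_finset]
  have hinj1 : Set.InjOn f1 ↑A := by
    intro p hp q hq hpq
    rw [Finset.mem_coe, memA] at hp hq
    obtain ⟨e1, e2⟩ := sub_injF hp.1 hq.1 hpq
    exact Prod.ext e1 e2
  have hinj2 : Set.InjOn f2 ↑Bs := fun i _ j _ h => ee_injF h
  have hinj3 : Set.InjOn f3 ↑C := by
    intro p hp q hq hpq
    rw [Finset.mem_coe, memC] at hp hq
    obtain ⟨e1, e2⟩ := add_injF hp.1 hq.1 hpq
    exact Prod.ext e1 e2
  have d12 : Disjoint (A.image f1) (Bs.image f2) := by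
    rw [Finset.disjoint_left]
    rintro v hv1 hv2
    obtain ⟨p, hp, rfl⟩ := Finset.mem_image.mp hv1
    obtain ⟨i, hi, he⟩ := Finset.mem_image.mp hv2
    have e0 : esum (f1 p) = 0 := esum_sub _ _
    rw [← he, hf2] at e0
    rw [esum_ee] at e0
    norm_num at e0
  have d3 : Disjoint (A.image f1 ∪ Bs.image f2) (C.image f3) := by
    rw [Finset.disjoint_left]
    rintro v hv1 hv2
    obtain ⟨p, hp, he⟩ := Finset.mem_image.mp hv2
    rcases Finset.mem_union.mp hv1 with h|h
    · obtain ⟨q, hq, rfl⟩ := Finset.mem_image.mp h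
      have e0 : esum (f3 p) = 2 := esum_add _ _
      rw [he, hf1, esum_sub] at e0
      norm_num at e0
    · obtain ⟨i, hi, rfl⟩ := Finset.mem_image.mp h
      have e0 : esum (f3 p) = 2 := esum_add _ _
      rw [he, hf2, esum_ee] at e0
      norm_num at e0
  rw [hT, Finset.card_union_of_disjoint d3, Finset.card_union_of_disjoint d12,
    Finset.card_image_of_injOn hinj1, Finset.card_image_of_injOn hinj2,
    Finset.card_image_of_injOn hinj3]
  have eA : A.card = oinvB σ := by rw [hA]; rfl
  have eB : Bs.card = onegB σ := by rw [hB]; rfl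
  have eC : C.card = onspB σ := by rw [hC]; rfl
  rw [eA, eB, eC]
  omega

theorem heights_and_oddLength_typeB (m : ℕ) :
    (∀ i j : Fin (m + 1), i < j →
      ∀ c : Fin (m + 1) → ℝ, ee j - ee i = ∑ k, c k • deltaB m k →
        ∑ k, c k = (((j : ℕ) - (i : ℕ) : ℕ) : ℝ)) ∧
    (∀ i : Fin (m + 1), ∀ c : Fin (m + 1) → ℝ, ee i = ∑ k, c k • deltaB m k →
        ∑ k, c k = (((i : ℕ) + 1 : ℕ) : ℝ)) ∧
    (∀ i j : Fin (m + 1), i < j →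
      ∀ c : Fin (m + 1) → ℝ, ee i + ee j = ∑ k, c k • deltaB m k →
        ∑ k, c k = (((i : ℕ) + (j : ℕ) + 2 : ℕ) : ℝ)) ∧
    (∀ σ : BG (m + 1), LB m σ = onegB σ + oinvB σ + onspB σ) := by
  exact ⟨part1, part2, part3, part4 m⟩
end

section
/- For every positive integer n, the signed generating function of oinv over the symmetric group equals its restriction to unimodal permutations: ∑_{σ ∈ S_n} (−1)^{inv(σ)} x^{oinv(σ)} = ∑_{σ ∈ U_n} (−1)^{inv(σ)} x^{oinv(σ)}. -/
open Finset

/-- inversion number of a permutation -/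
def invA {n : ℕ} (σ : Equiv.Perm (Fin n)) : ℕ :=
  ((pairsF n).filter fun p => σ p.2 < σ p.1).card

/-- number of odd inversions of a permutation -/
def oinvA {n : ℕ} (σ : Equiv.Perm (Fin n)) : ℕ :=
  ((pairsF n).filter fun p => σ p.2 < σ p.1 ∧ (p.2.val - p.1.val) % 2 = 1).card

/-- `σ` has a peak at a middle position `j`. -/
def HasPeak {n : ℕ} (σ : Equiv.Perm (Fin n)) : Prop :=
  ∃ i j k : Fin n, i.val + 1 = j.val ∧ j.val + 1 = k.val ∧ σ i < σ j ∧ σ k < σ j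

/-- a permutation is unimodal if it has no peaks -/
def UnimodalA {n : ℕ} (σ : Equiv.Perm (Fin n)) : Prop := ¬ HasPeak σ

instance {n : ℕ} : DecidablePred (UnimodalA (n := n)) := fun σ => by
  unfold UnimodalA HasPeak; infer_instance

namespace SignedOinv

variable {n : ℕ}

/-- `(i,j,k)` is a peak triple for `σ`. -/
def TripleP (σ : Equiv.Perm (Fin n)) (i j k : Fin n) : Prop :=
  i.val + 1 = j.val ∧ j.val + 1 = k.val ∧ σ i < σ j ∧ σ k < σ j

instance (σ : Equiv.Perm (Fin n)) (i j k : Fin n) : Decidable (TripleP σ i j k) := by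
  unfold TripleP; infer_instance

/-- set of peak positions -/
def peaksF (σ : Equiv.Perm (Fin n)) : Finset (Fin n) :=
  univ.filter fun j => ∃ i k : Fin n, TripleP σ i j k

/-- `j` is the peak of maximal value, with neighbors `i`, `k`. -/
def MaxP (σ : Equiv.Perm (Fin n)) (i j k : Fin n) : Prop :=
  TripleP σ i j k ∧ ∀ j' ∈ peaksF σ, σ j' ≤ σ j

instance (σ : Equiv.Perm (Fin n)) (i j k : Fin n) : Decidable (MaxP σ i j k) := by
  unfold MaxP; infer_instance

lemma mem_peaksF {σ : Equiv.Perm (Fin n)} {j : Fin n} :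
    j ∈ peaksF σ ↔ ∃ i k : Fin n, TripleP σ i j k := by
  simp [peaksF]

lemma maxP_unique {σ : Equiv.Perm (Fin n)} {i j k i' j' k' : Fin n}
    (h1 : MaxP σ i j k) (h2 : MaxP σ i' j' k') : i = i' ∧ j = j' ∧ k = k' := by
  have hj : j ∈ peaksF σ := mem_peaksF.2 ⟨i, k, h1.1⟩
  have hj' : j' ∈ peaksF σ := mem_peaksF.2 ⟨i', k', h2.1⟩
  have hjj : j = j' := σ.injective (le_antisymm (h2.2 j hj) (h1.2 j' hj'))
  subst hjj
  obtain ⟨e1, e2, -, -⟩ := h1.1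
  obtain ⟨e1', e2', -, -⟩ := h2.1
  exact ⟨Fin.ext (by omega), rfl, Fin.ext (by omega)⟩

noncomputable def gfun (σ : Equiv.Perm (Fin n)) : Equiv.Perm (Fin n) :=
  if h : ∃ i j k : Fin n, MaxP σ i j k then
    σ * Equiv.swap h.choose h.choose_spec.choose_spec.choose
  else σ

lemma gfun_eq {σ : Equiv.Perm (Fin n)} {i j k : Fin n} (h : MaxP σ i j k) :
    gfun σ = σ * Equiv.swap i k := by
  have hex : ∃ i j k : Fin n, MaxP σ i j k := ⟨i, j, k, h⟩
  rw [gfun, dif_pos hex]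
  have spec := hex.choose_spec.choose_spec.choose_spec
  obtain ⟨e1, -, e3⟩ := maxP_unique spec h
  rw [← e1, ← e3]

lemma exists_maxP {σ : Equiv.Perm (Fin n)} (h : HasPeak σ) :
    ∃ i j k : Fin n, MaxP σ i j k := by
  obtain ⟨i, j, k, h1, h2, h3, h4⟩ := h
  have hne : (peaksF σ).Nonempty := ⟨j, mem_peaksF.2 ⟨i, k, h1, h2, h3, h4⟩⟩
  have hne' : ((peaksF σ).image σ).Nonempty := hne.image σ
  have hm := Finset.max'_mem _ hne'
  obtain ⟨j0, hj0mem, hj0⟩ := Finset.mem_image.mp hm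
  obtain ⟨i0, k0, ht⟩ := mem_peaksF.mp hj0mem
  refine ⟨i0, j0, k0, ht, fun j' hj' => ?_⟩
  rw [hj0]
  exact Finset.le_max' _ _ (Finset.mem_image_of_mem σ hj')

/-! ### The pair involution -/

/-- Involution on pairs used to compare inversions of `σ` and `σ * swap i k`. -/
def SW (i j k : Fin n) (p : Fin n × Fin n) : Fin n × Fin n :=
  if p = (i, j) ∨ p = (j, k) then p
  else if ((Equiv.swap i k) p.1) < ((Equiv.swap i k) p.2)
    then (Equiv.swap i k p.1, Equiv.swap i k p.2)
    else (Equiv.swap i k p.2, Equiv.swap i k p.1)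

lemma mem_pairsF {p : Fin n × Fin n} : p ∈ pairsF n ↔ p.1 < p.2 := by
  simp [pairsF]

lemma SW_eq_special {i j k : Fin n} {p : Fin n × Fin n}
    (h : p = (i, j) ∨ p = (j, k)) : SW i j k p = p := by
  rw [SW, if_pos h]

lemma SW_eq_gen {i j k : Fin n} {p : Fin n × Fin n}
    (h : ¬(p = (i, j) ∨ p = (j, k)))
    (hlt : (Equiv.swap i k) p.1 < (Equiv.swap i k) p.2) :
    SW i j k p = (Equiv.swap i k p.1, Equiv.swap i k p.2) := by
  rw [SW, if_neg h, if_pos hlt]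

section Core

variable {σ : Equiv.Perm (Fin n)} {i j k : Fin n}

lemma SW_spec (hT : TripleP σ i j k) (p : Fin n × Fin n) (hp : p.1 < p.2)
    (hne : p ≠ (i, k)) :
    (SW i j k p).1 < (SW i j k p).2 ∧
    SW i j k (SW i j k p) = p ∧
    SW i j k p ≠ (i, k) ∧
    ((SW i j k p).2.val - (SW i j k p).1.val) % 2 = (p.2.val - p.1.val) % 2 ∧
    (σ (Equiv.swap i k p.2) < σ (Equiv.swap i k p.1) ↔
      σ (SW i j k p).2 < σ (SW i j k p).1) := by
  obtain ⟨a, b⟩ := p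
  obtain ⟨e1, e2, h3, h4⟩ := hT
  simp only at *
  rw [Fin.lt_def] at hp
  have hVne : ∀ u v u' v' : Fin n,
      (u.val ≠ u'.val ∨ v.val ≠ v'.val) → ((u, v) : Fin n × Fin n) ≠ (u', v') := by
    rintro u v u' v' h heq
    rw [Prod.mk.injEq] at heq
    rcases h with h | h
    · exact h (congrArg Fin.val heq.1)
    · exact h (congrArg Fin.val heq.2)
  have hneik : a.val ≠ i.val ∨ b.val ≠ k.val := by
    by_contra hc
    push_neg at hc
    exact hne (by rw [Prod.mk.injEq]; exact ⟨Fin.ext hc.1, Fin.ext hc.2⟩)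
  have hSik : Equiv.swap i k i = k := Equiv.swap_apply_left i k
  have hSki : Equiv.swap i k k = i := Equiv.swap_apply_right i k
  have hSother : ∀ x : Fin n, x.val ≠ i.val → x.val ≠ k.val → Equiv.swap i k x = x := by
    intro x h1 h2
    exact Equiv.swap_apply_of_ne_of_ne (fun h => h1 (congrArg Fin.val h))
      (fun h => h2 (congrArg Fin.val h))
  by_cases hai : a.val = i.val
  · have hai' : a = i := Fin.ext hai
    by_cases hbj : b.val = j.val
    · -- special pair (i, j)
      have hsp : ((a, b) : Fin n × Fin n) = (i, j) ∨ ((a, b) : Fin n × Fin n) = (j, k) :=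
        Or.inl (by rw [Prod.mk.injEq]; exact ⟨hai', Fin.ext hbj⟩)
      have hSW : SW i j k (a, b) = (a, b) := SW_eq_special hsp
      rw [hSW]
      refine ⟨by simp only [Fin.lt_def]; omega, hSW, hVne _ _ _ _ (Or.inr (by omega)),
        rfl, ?_⟩
      rw [hai', Fin.ext hbj, hSik, hSother j (by omega) (by omega)]
      constructor
      · intro h; exact absurd h (not_lt.2 h4.le)
      · intro h; exact absurd h (not_lt.2 h3.le)
    · -- a = i, b ∉ {i,j,k} : b.val > k.val ; (i,b) ↦ (k,b)
      have hbk : b.val ≠ k.val := by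
        rcases hneik with h | h
        · omega
        · exact h
      have hbv : k.val < b.val := by omega
      have hSa : Equiv.swap i k a = k := by rw [hai', hSik]
      have hSb : Equiv.swap i k b = b := hSother b (by omega) hbk
      have hns : ¬(((a, b) : Fin n × Fin n) = (i, j) ∨ ((a, b) : Fin n × Fin n) = (j, k)) := by
        rintro (h | h) <;> rw [Prod.mk.injEq] at h
        · exact hbj (congrArg Fin.val h.2)
        · have := congrArg Fin.val h.1; omega
      have hlt : Equiv.swap i k a < Equiv.swap i k b := by
        rw [hSa, hSb, Fin.lt_def]; omega
      have hSW : SW i j k (a, b) = (k, b) := by rw [SW_eq_gen hns hlt, hSa, hSb]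
      have hns2 : ¬(((k, b) : Fin n × Fin n) = (i, j) ∨ ((k, b) : Fin n × Fin n) = (j, k)) := by
        rintro (h | h) <;> rw [Prod.mk.injEq] at h
        · have := congrArg Fin.val h.1; omega
        · have := congrArg Fin.val h.1; omega
      have hlt2 : Equiv.swap i k k < Equiv.swap i k b := by
        rw [hSki, hSb, Fin.lt_def]; omega
      have hSW2 : SW i j k (k, b) = (a, b) := by
        rw [SW_eq_gen hns2 hlt2]
        simp only [hSki, hSb, Prod.mk.injEq, and_true]
        exact hai'.symm
      rw [hSW]
      refine ⟨by simp only [Fin.lt_def]; omega, hSW2, hVne _ _ _ _ (Or.inl (by omega)),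
        by simp only []; omega, by rw [hSa, hSb]⟩
  · by_cases haj : a.val = j.val
    · have haj' : a = j := Fin.ext haj
      by_cases hbk : b.val = k.val
      · -- special pair (j, k)
        have hsp : ((a, b) : Fin n × Fin n) = (i, j) ∨ ((a, b) : Fin n × Fin n) = (j, k) :=
          Or.inr (by rw [Prod.mk.injEq]; exact ⟨haj', Fin.ext hbk⟩)
        have hSW : SW i j k (a, b) = (a, b) := SW_eq_special hsp
        rw [hSW]
        refine ⟨by simp only [Fin.lt_def]; omega, hSW, hVne _ _ _ _ (Or.inl (by omega)),
          rfl, ?_⟩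
        rw [haj', Fin.ext hbk, hSki, hSother j (by omega) (by omega)]
        exact ⟨fun _ => h4, fun _ => h3⟩
      · -- a = j, b > k : fixed pair
        have hbv : k.val < b.val := by omega
        have hSa : Equiv.swap i k a = a := hSother a (by omega) (by omega)
        have hSb : Equiv.swap i k b = b := hSother b (by omega) (by omega)
        have hns : ¬(((a, b) : Fin n × Fin n) = (i, j) ∨ ((a, b) : Fin n × Fin n) = (j, k)) := by
          rintro (h | h) <;> rw [Prod.mk.injEq] at h
          · have := congrArg Fin.val h.1; omega
          · exact hbk (congrArg Fin.val h.2)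
        have hlt : Equiv.swap i k a < Equiv.swap i k b := by
          rw [hSa, hSb, Fin.lt_def]; omega
        have hSW : SW i j k (a, b) = (a, b) := by rw [SW_eq_gen hns hlt, hSa, hSb]
        rw [hSW]
        refine ⟨by simp only [Fin.lt_def]; omega, hSW, hVne _ _ _ _ (Or.inl (by omega)),
          rfl, by rw [hSa, hSb]⟩
    · by_cases hak : a.val = k.val
      · -- a = k, b > k : (k, b) ↦ (i, b)
        have hak' : a = k := Fin.ext hak
        have hSa : Equiv.swap i k a = i := by rw [hak', hSki]
        have hSb : Equiv.swap i k b = b := hSother b (by omega) (by omega)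
        have hns : ¬(((a, b) : Fin n × Fin n) = (i, j) ∨ ((a, b) : Fin n × Fin n) = (j, k)) := by
          rintro (h | h) <;> rw [Prod.mk.injEq] at h
          · have := congrArg Fin.val h.1; omega
          · have := congrArg Fin.val h.1; omega
        have hlt : Equiv.swap i k a < Equiv.swap i k b := by
          rw [hSa, hSb, Fin.lt_def]; omega
        have hSW : SW i j k (a, b) = (i, b) := by rw [SW_eq_gen hns hlt, hSa, hSb]
        have hns2 : ¬(((i, b) : Fin n × Fin n) = (i, j) ∨ ((i, b) : Fin n × Fin n) = (j, k)) := by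
          rintro (h | h) <;> rw [Prod.mk.injEq] at h
          · have := congrArg Fin.val h.2; omega
          · have := congrArg Fin.val h.1; omega
        have hlt2 : Equiv.swap i k i < Equiv.swap i k b := by
          rw [hSik, hSb, Fin.lt_def]; omega
        have hSW2 : SW i j k (i, b) = (a, b) := by
          rw [SW_eq_gen hns2 hlt2]
          simp only [hSik, hSb, Prod.mk.injEq, and_true]
          exact hak'.symm
        rw [hSW]
        refine ⟨by simp only [Fin.lt_def]; omega, hSW2, hVne _ _ _ _ (Or.inr (by omega)),
          by simp only []; omega, by rw [hSa, hSb]⟩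
      · -- a ∉ {i, j, k}
        have hSa : Equiv.swap i k a = a := hSother a hai hak
        by_cases hbi : b.val = i.val
        · -- (a, i) ↦ (a, k), with a < i
          have hbi' : b = i := Fin.ext hbi
          have hSb : Equiv.swap i k b = k := by rw [hbi', hSik]
          have hns : ¬(((a, b) : Fin n × Fin n) = (i, j) ∨ ((a, b) : Fin n × Fin n) = (j, k)) := by
            rintro (h | h) <;> rw [Prod.mk.injEq] at h
            · exact hai (congrArg Fin.val h.1)
            · have := congrArg Fin.val h.2; omega
          have hlt : Equiv.swap i k a < Equiv.swap i k b := by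
            rw [hSa, hSb, Fin.lt_def]; omega
          have hSW : SW i j k (a, b) = (a, k) := by rw [SW_eq_gen hns hlt, hSa, hSb]
          have hns2 : ¬(((a, k) : Fin n × Fin n) = (i, j) ∨ ((a, k) : Fin n × Fin n) = (j, k)) := by
            rintro (h | h) <;> rw [Prod.mk.injEq] at h
            · exact hai (congrArg Fin.val h.1)
            · exact haj (congrArg Fin.val h.1)
          have hlt2 : Equiv.swap i k a < Equiv.swap i k k := by
            rw [hSa, hSki, Fin.lt_def]; omega
          have hSW2 : SW i j k (a, k) = (a, b) := by
            rw [SW_eq_gen hns2 hlt2]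
            simp only [hSa, hSki, Prod.mk.injEq, true_and]
            exact hbi'.symm
          rw [hSW]
          refine ⟨by simp only [Fin.lt_def]; omega, hSW2, hVne _ _ _ _ (Or.inl (by omega)),
            by simp only []; omega, by rw [hSa, hSb]⟩
        · by_cases hbk : b.val = k.val
          · -- (a, k) ↦ (a, i), with a < i
            have hbk' : b = k := Fin.ext hbk
            have hav : a.val < i.val := by omega
            have hSb : Equiv.swap i k b = i := by rw [hbk', hSki]
            have hns : ¬(((a, b) : Fin n × Fin n) = (i, j) ∨ ((a, b) : Fin n × Fin n) = (j, k)) := by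
              rintro (h | h) <;> rw [Prod.mk.injEq] at h
              · exact hai (congrArg Fin.val h.1)
              · exact haj (congrArg Fin.val h.1)
            have hlt : Equiv.swap i k a < Equiv.swap i k b := by
              rw [hSa, hSb, Fin.lt_def]; omega
            have hSW : SW i j k (a, b) = (a, i) := by rw [SW_eq_gen hns hlt, hSa, hSb]
            have hns2 : ¬(((a, i) : Fin n × Fin n) = (i, j) ∨ ((a, i) : Fin n × Fin n) = (j, k)) := by
              rintro (h | h) <;> rw [Prod.mk.injEq] at h
              · exact hai (congrArg Fin.val h.1)
              · exact haj (congrArg Fin.val h.1)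
            have hlt2 : Equiv.swap i k a < Equiv.swap i k i := by
              rw [hSa, hSik, Fin.lt_def]; omega
            have hSW2 : SW i j k (a, i) = (a, b) := by
              rw [SW_eq_gen hns2 hlt2]
              simp only [hSa, hSik, Prod.mk.injEq, true_and]
              exact hbk'.symm
            rw [hSW]
            refine ⟨by simp only [Fin.lt_def]; omega, hSW2, hVne _ _ _ _ (Or.inr (by omega)),
              by simp only []; omega, by rw [hSa, hSb]⟩
          · -- a, b ∉ {i, k} : fixed pair
            have hSb : Equiv.swap i k b = b := hSother b hbi hbk
            have hns : ¬(((a, b) : Fin n × Fin n) = (i, j) ∨ ((a, b) : Fin n × Fin n) = (j, k)) := by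
              rintro (h | h) <;> rw [Prod.mk.injEq] at h
              · exact hai (congrArg Fin.val h.1)
              · exact hbk (congrArg Fin.val h.2)
            have hlt : Equiv.swap i k a < Equiv.swap i k b := by
              rw [hSa, hSb, Fin.lt_def]; omega
            have hSW : SW i j k (a, b) = (a, b) := by rw [SW_eq_gen hns hlt, hSa, hSb]
            rw [hSW]
            refine ⟨by simp only [Fin.lt_def]; omega, hSW, hVne _ _ _ _ (Or.inl hai),
              rfl, by rw [hSa, hSb]⟩

lemma oinv_swap (hT : TripleP σ i j k) :
    oinvA (σ * Equiv.swap i k) = oinvA σ := by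
  unfold oinvA
  have hkv : k.val = i.val + 2 := by obtain ⟨e1, e2, -, -⟩ := hT; omega
  apply Finset.card_nbij' (SW i j k) (SW i j k)
  · intro p hp
    rw [Finset.mem_coe, Finset.mem_filter] at hp ⊢
    obtain ⟨hpm, hinv, hpar⟩ := hp
    have hpd := mem_pairsF.mp hpm
    have hpne : p ≠ (i, k) := by
      rintro rfl; simp only at hpar; omega
    obtain ⟨c1, c2, c3, c4, c5⟩ := SW_spec hT p hpd hpne
    simp only [Equiv.Perm.mul_apply] at hinv
    exact ⟨mem_pairsF.mpr c1, c5.mp hinv, by omega⟩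
  · intro p hp
    rw [Finset.mem_coe, Finset.mem_filter] at hp ⊢
    obtain ⟨hpm, hinv, hpar⟩ := hp
    have hpd := mem_pairsF.mp hpm
    have hpne : p ≠ (i, k) := by
      rintro rfl; simp only at hpar; omega
    obtain ⟨c1, c2, c3, c4, c5⟩ := SW_spec hT p hpd hpne
    obtain ⟨d1, d2, d3, d4, d5⟩ := SW_spec hT (SW i j k p) c1 c3
    refine ⟨mem_pairsF.mpr c1, ?_, by omega⟩
    simp only [Equiv.Perm.mul_apply]
    exact d5.mpr (by rw [c2]; exact hinv)
  · intro p hp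
    rw [Finset.mem_coe, Finset.mem_filter] at hp
    have hpd := mem_pairsF.mp hp.1
    have hpne : p ≠ (i, k) := by
      rintro rfl; have := hp.2.2; simp only at this; omega
    exact (SW_spec hT p hpd hpne).2.1
  · intro p hp
    rw [Finset.mem_coe, Finset.mem_filter] at hp
    have hpd := mem_pairsF.mp hp.1
    have hpne : p ≠ (i, k) := by
      rintro rfl; have := hp.2.2; simp only at this; omega
    exact (SW_spec hT p hpd hpne).2.1

lemma inv_swap_parity (hT : TripleP σ i j k) :
    (invA (σ * Equiv.swap i k) + invA σ) % 2 = 1 := by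
  obtain ⟨e1, e2, h3, h4⟩ := hT
  have hikmem : ((i, k) : Fin n × Fin n) ∈ pairsF n :=
    mem_pairsF.mpr (by simp only [Fin.lt_def]; omega)
  unfold invA
  rw [Finset.card_filter, Finset.card_filter,
    ← Finset.add_sum_erase _ _ hikmem, ← Finset.add_sum_erase _ _ hikmem]
  have hsum : (∑ p ∈ (pairsF n).erase (i, k),
        (if (σ * Equiv.swap i k) p.2 < (σ * Equiv.swap i k) p.1 then 1 else 0)) =
      (∑ p ∈ (pairsF n).erase (i, k), (if σ p.2 < σ p.1 then 1 else 0)) := by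
    apply Finset.sum_nbij' (SW i j k) (SW i j k)
    · intro p hp
      rw [Finset.mem_erase] at hp ⊢
      obtain ⟨c1, c2, c3, c4, c5⟩ := SW_spec ⟨e1, e2, h3, h4⟩ p (mem_pairsF.mp hp.2) hp.1
      exact ⟨c3, mem_pairsF.mpr c1⟩
    · intro p hp
      rw [Finset.mem_erase] at hp ⊢
      obtain ⟨c1, c2, c3, c4, c5⟩ := SW_spec ⟨e1, e2, h3, h4⟩ p (mem_pairsF.mp hp.2) hp.1
      exact ⟨c3, mem_pairsF.mpr c1⟩
    · intro p hp
      rw [Finset.mem_erase] at hp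
      exact (SW_spec ⟨e1, e2, h3, h4⟩ p (mem_pairsF.mp hp.2) hp.1).2.1
    · intro p hp
      rw [Finset.mem_erase] at hp
      exact (SW_spec ⟨e1, e2, h3, h4⟩ p (mem_pairsF.mp hp.2) hp.1).2.1
    · intro p hp
      rw [Finset.mem_erase] at hp
      obtain ⟨c1, c2, c3, c4, c5⟩ := SW_spec ⟨e1, e2, h3, h4⟩ p (mem_pairsF.mp hp.2) hp.1
      simp only [Equiv.Perm.mul_apply]
      exact if_congr c5 rfl rfl
  rw [hsum]
  have hik : i ≠ k := by intro h; rw [h] at e1; omega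
  have hv1 : (σ * Equiv.swap i k) ((i, k) : Fin n × Fin n).2 = σ i := by
    simp [Equiv.Perm.mul_apply]
  have hv2 : (σ * Equiv.swap i k) ((i, k) : Fin n × Fin n).1 = σ k := by
    simp [Equiv.Perm.mul_apply]
  rw [hv1, hv2]
  have hne : σ i ≠ σ k := fun h => hik (σ.injective h)
  rcases lt_or_gt_of_ne hne with h | h
  · rw [if_pos h, if_neg (not_lt.2 h.le)]; omega
  · rw [if_neg (not_lt.2 h.le), if_pos h]; omega

lemma maxP_transfer (h : MaxP σ i j k) : MaxP (σ * Equiv.swap i k) i j k := by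
  obtain ⟨⟨e1, e2, h3, h4⟩, hmax⟩ := h
  have hik : i ≠ k := by intro h; rw [h] at e1; omega
  have hijne : j ≠ i := by intro h; rw [h] at e1; omega
  have hjkne : j ≠ k := by intro h; rw [h] at e2; omega
  set τ := σ * Equiv.swap i k with hτ
  have hτi : τ i = σ k := by simp [hτ, Equiv.Perm.mul_apply]
  have hτk : τ k = σ i := by simp [hτ, Equiv.Perm.mul_apply]
  have hτj : τ j = σ j := by
    simp [hτ, Equiv.Perm.mul_apply, Equiv.swap_apply_of_ne_of_ne hijne hjkne]
  have hτo : ∀ x : Fin n, x ≠ i → x ≠ k → τ x = σ x := by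
    intro x hx1 hx2
    simp [hτ, Equiv.Perm.mul_apply, Equiv.swap_apply_of_ne_of_ne hx1 hx2]
  refine ⟨⟨e1, e2, by rw [hτi, hτj]; exact h4, by rw [hτk, hτj]; exact h3⟩, ?_⟩
  intro j' hj'
  obtain ⟨i', k', f1, f2, f3, f4⟩ := mem_peaksF.mp hj'
  by_contra hc
  push_neg at hc
  rw [hτj] at hc
  -- τ j' > σ j, hence j' ∉ {i, j, k} and τ j' = σ j'
  have hj'i : j' ≠ i := by rintro rfl; rw [hτi] at hc; exact absurd hc (not_lt.2 h4.le)
  have hj'k : j' ≠ k := by rintro rfl; rw [hτk] at hc; exact absurd hc (not_lt.2 h3.le)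
  have hj'j : j' ≠ j := by rintro rfl; rw [hτj] at hc; exact lt_irrefl _ hc
  have hval : τ j' = σ j' := hτo j' hj'i hj'k
  rw [hval] at hc
  -- show j' is a peak of σ
  have hi' : σ i' < σ j' := by
    by_cases h1 : i' = i
    · subst h1; exact h3.trans hc
    · by_cases h2 : i' = k
      · subst h2; exact h4.trans hc
      · rw [← hτo i' h1 h2, ← hval]; exact f3
  have hk' : σ k' < σ j' := by
    by_cases h1 : k' = i
    · subst h1; exact h3.trans hc
    · by_cases h2 : k' = k
      · subst h2; exact h4.trans hc
      · rw [← hτo k' h1 h2, ← hval]; exact f4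
  have : j' ∈ peaksF σ := mem_peaksF.2 ⟨i', k', f1, f2, hi', hk'⟩
  exact absurd hc (not_lt.2 (hmax j' this))

end Core

end SignedOinv

open SignedOinv in
theorem signed_oinv_eq_unimodal (n : ℕ) (hn : 0 < n)
    (R : Type*) [CommRing R] (x : R) :
    ∑ σ : Equiv.Perm (Fin n), (-1 : R) ^ invA σ * x ^ oinvA σ =
      ∑ σ ∈ univ.filter (fun σ : Equiv.Perm (Fin n) => UnimodalA σ),
        (-1 : R) ^ invA σ * x ^ oinvA σ := by
  classical
  rw [← Finset.sum_filter_add_sum_filter_not univ (fun σ : Equiv.Perm (Fin n) => UnimodalA σ)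
    (fun σ => (-1 : R) ^ invA σ * x ^ oinvA σ)]
  have hzero : ∑ σ ∈ univ.filter (fun σ : Equiv.Perm (Fin n) => ¬ UnimodalA σ),
      (-1 : R) ^ invA σ * x ^ oinvA σ = 0 := by
    have hpeak : ∀ σ : Equiv.Perm (Fin n),
        σ ∈ univ.filter (fun σ : Equiv.Perm (Fin n) => ¬ UnimodalA σ) → HasPeak σ := by
      intro σ hσ
      have := (Finset.mem_filter.mp hσ).2
      rwa [UnimodalA, not_not] at this
    apply Finset.sum_involution (fun σ _ => gfun σ)
    · -- f σ + f (gfun σ) = 0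
      intro σ hσ
      obtain ⟨i, j, k, hmax⟩ := exists_maxP (hpeak σ hσ)
      rw [gfun_eq hmax]
      set τ := σ * Equiv.swap i k with hτ
      have hoinv : oinvA τ = oinvA σ := oinv_swap hmax.1
      have hparity : (invA τ + invA σ) % 2 = 1 := inv_swap_parity hmax.1
      have hodd : Odd (invA τ + invA σ) := Nat.odd_iff.mpr hparity
      have hprod : (-1 : R) ^ invA τ * (-1 : R) ^ invA σ = -1 := by
        rw [← pow_add, hodd.neg_one_pow]
      have hsq : (-1 : R) ^ invA σ * (-1 : R) ^ invA σ = 1 := by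
        rw [← pow_add, (Even.add_self _).neg_one_pow]
      have hneg : (-1 : R) ^ invA τ = -((-1 : R) ^ invA σ) := by
        have := congrArg (· * (-1 : R) ^ invA σ) hprod
        simp only [mul_assoc, hsq, mul_one] at this
        rw [this]; ring
      rw [hoinv, hneg]; ring
    · -- gfun σ ≠ σ
      intro σ hσ _
      obtain ⟨i, j, k, hmax⟩ := exists_maxP (hpeak σ hσ)
      rw [gfun_eq hmax]
      intro hcontra
      have h1 : σ (Equiv.swap i k i) = σ i := by
        have := congrArg (fun τ : Equiv.Perm (Fin n) => τ i) hcontra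
        simpa [Equiv.Perm.mul_apply] using this
      have h2 : Equiv.swap i k i = i := σ.injective h1
      rw [Equiv.swap_apply_left] at h2
      obtain ⟨e1, e2, -, -⟩ := hmax.1
      rw [h2] at e2
      omega
    · -- gfun σ ∈ s
      intro σ hσ
      obtain ⟨i, j, k, hmax⟩ := exists_maxP (hpeak σ hσ)
      rw [gfun_eq hmax]
      rw [Finset.mem_filter]
      refine ⟨Finset.mem_univ _, ?_⟩
      rw [UnimodalA, not_not]
      obtain ⟨⟨e1, e2, p3, p4⟩, -⟩ := maxP_transfer hmax
      exact ⟨i, j, k, e1, e2, p3, p4⟩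
    · -- involution
      intro σ hσ
      obtain ⟨i, j, k, hmax⟩ := exists_maxP (hpeak σ hσ)
      rw [gfun_eq hmax, gfun_eq (maxP_transfer hmax), mul_assoc,
        Equiv.swap_mul_self, mul_one]
  rw [hzero, add_zero]
end

section
/- For every positive integer n, ∑_{σ ∈ C(S_n)} (−1)^{inv(σ)} x^{oinv(σ)} = ∑_{σ ∈ C(U_n)} (−1)^{inv(σ)} x^{oinv(σ)}, where C(X) denotes the chessboard elements of X. -/
open Finset

/-- a permutation is chessboard if `σ(i) ≡ i (mod 2)` for all `i`, or
`σ(i) ≡ i + 1 (mod 2)` for all `i` (1-based, equivalently 0-based). -/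
def ChessboardA {n : ℕ} (σ : Equiv.Perm (Fin n)) : Prop :=
  (∀ i, (σ i).val % 2 = i.val % 2) ∨ (∀ i, (σ i).val % 2 = (i.val + 1) % 2)

instance {n : ℕ} : DecidablePred (ChessboardA (n := n)) := fun σ => by
  unfold ChessboardA; infer_instance

namespace CBAux

variable {n : ℕ}

def fsub1 (j : Fin n) : Fin n := ⟨j.val - 1, lt_of_le_of_lt (Nat.sub_le _ _) j.isLt⟩

def fadd1 (j : Fin n) : Fin n := ⟨min (j.val + 1) (n - 1), by have := j.isLt; omega⟩

lemma fsub1_val (j : Fin n) : (fsub1 j).val = j.val - 1 := rfl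

lemma fadd1_val {j : Fin n} (h : j.val + 1 < n) : (fadd1 j).val = j.val + 1 := by
  simp only [fadd1]; omega

def isPeakAt (σ : Equiv.Perm (Fin n)) (j : Fin n) : Prop :=
  0 < j.val ∧ j.val + 1 < n ∧ σ (fsub1 j) < σ j ∧ σ (fadd1 j) < σ j

instance (σ : Equiv.Perm (Fin n)) : DecidablePred (isPeakAt σ) := fun j => by
  unfold isPeakAt; infer_instance

lemma hasPeak_iff (σ : Equiv.Perm (Fin n)) : HasPeak σ ↔ ∃ j, isPeakAt σ j := by
  constructor
  · rintro ⟨i, j, k, h1, h2, h3, h4⟩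
    refine ⟨j, by omega, by have := k.isLt; omega, ?_, ?_⟩
    · have hij : fsub1 j = i := Fin.ext (by rw [fsub1_val]; omega)
      rwa [hij]
    · have hkj : fadd1 j = k := Fin.ext (by rw [fadd1_val (by have := k.isLt; omega)]; omega)
      rwa [hkj]
  · rintro ⟨j, h0, h1, h3, h4⟩
    exact ⟨fsub1 j, j, fadd1 j, by rw [fsub1_val]; omega, by rw [fadd1_val h1], h3, h4⟩

def iota (a c j : Fin n) (p : Fin n × Fin n) : Fin n × Fin n :=
  if p.1 = j ∨ p.2 = j then p else (Equiv.swap a c p.1, Equiv.swap a c p.2)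

section Master

variable {σ : Equiv.Perm (Fin n)} {a j c : Fin n}

lemma iota_spec (ha : a.val + 1 = j.val) (hc : j.val + 1 = c.val)
    (h1 : σ a < σ j) (h2 : σ c < σ j)
    (p : Fin n × Fin n) (hp : p.1 < p.2) (hpac : p ≠ (a, c)) :
    (iota a c j p).1 < (iota a c j p).2 ∧ iota a c j p ≠ (a, c) ∧
      ((iota a c j p).2.val - (iota a c j p).1.val) % 2 = (p.2.val - p.1.val) % 2 ∧
      ((σ * Equiv.swap a c) p.2 < (σ * Equiv.swap a c) p.1 ↔
        σ (iota a c j p).2 < σ (iota a c j p).1) := by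
  obtain ⟨u, v⟩ := p
  simp only at hp ⊢
  have haj : a ≠ j := fun h => by rw [Fin.ext_iff] at h; omega
  have hcj : c ≠ j := fun h => by rw [Fin.ext_iff] at h; omega
  have hja : j ≠ a := Ne.symm haj
  have hjc : j ≠ c := Ne.symm hcj
  have hvuv : u.val < v.val := hp
  by_cases hb : u = j ∨ v = j
  · rw [iota, if_pos hb]
    refine ⟨hp, ?_, rfl, ?_⟩
    · intro h
      rw [Prod.mk.injEq] at h
      rcases hb with hbu | hbv
      · exact haj (h.1.symm.trans hbu)
      · exact hcj (h.2.symm.trans hbv)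
    · rcases hb with hbu | hbv
      · -- u = j
        have hva : v ≠ a := fun h => by
          rw [Fin.ext_iff] at h hbu; omega
        by_cases hvc : v = c
        · rw [hbu, hvc, Equiv.Perm.mul_apply, Equiv.Perm.mul_apply, Equiv.swap_apply_right,
            Equiv.swap_apply_of_ne_of_ne hja hjc]
          exact iff_of_true h1 h2
        · rw [hbu, Equiv.Perm.mul_apply, Equiv.Perm.mul_apply,
            Equiv.swap_apply_of_ne_of_ne hva hvc, Equiv.swap_apply_of_ne_of_ne hja hjc]
      · -- v = j
        have huc : u ≠ c := fun h => by
          rw [Fin.ext_iff] at h hbv; omega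
        by_cases hua : u = a
        · rw [hbv, hua, Equiv.Perm.mul_apply, Equiv.Perm.mul_apply, Equiv.swap_apply_left,
            Equiv.swap_apply_of_ne_of_ne hja hjc]
          exact iff_of_false (fun h => absurd h2 (lt_asymm h)) (fun h => absurd h1 (lt_asymm h))
        · rw [hbv, Equiv.Perm.mul_apply, Equiv.Perm.mul_apply,
            Equiv.swap_apply_of_ne_of_ne hua huc, Equiv.swap_apply_of_ne_of_ne hja hjc]
  · push_neg at hb
    obtain ⟨hu, hv⟩ := hb
    rw [iota, if_neg (by push_neg; exact ⟨hu, hv⟩)]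
    dsimp only
    have huvj : u.val ≠ j.val := fun h => hu (Fin.ext h)
    have hvvj : v.val ≠ j.val := fun h => hv (Fin.ext h)
    have key : (Equiv.swap a c u).val < (Equiv.swap a c v).val ∧
        ((Equiv.swap a c v).val - (Equiv.swap a c u).val) % 2 = (v.val - u.val) % 2 := by
      by_cases hua : u = a
      · have hvc : v ≠ c := fun h => hpac (by rw [hua, h])
        have hva : v ≠ a := fun h => by rw [Fin.ext_iff] at h hua; omega
        have hv2 : v.val ≠ c.val := fun h => hvc (Fin.ext h)
        have hu2 : u.val = a.val := Fin.ext_iff.1 hua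
        rw [hua, Equiv.swap_apply_left, Equiv.swap_apply_of_ne_of_ne hva hvc]
        constructor <;> omega
      · by_cases huc : u = c
        · have hva : v ≠ a := fun h => by rw [Fin.ext_iff] at h huc; omega
          have hvc : v ≠ c := fun h => by rw [Fin.ext_iff] at h huc; omega
          have hu2 : u.val = c.val := Fin.ext_iff.1 huc
          rw [huc, Equiv.swap_apply_right, Equiv.swap_apply_of_ne_of_ne hva hvc]
          constructor <;> omega
        · have hu2a : u.val ≠ a.val := fun h => hua (Fin.ext h)
          have hu2c : u.val ≠ c.val := fun h => huc (Fin.ext h)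
          rw [Equiv.swap_apply_of_ne_of_ne hua huc]
          by_cases hva : v = a
          · have hv2 : v.val = a.val := Fin.ext_iff.1 hva
            rw [hva, Equiv.swap_apply_left]
            constructor <;> omega
          · by_cases hvc : v = c
            · have hv2 : v.val = c.val := Fin.ext_iff.1 hvc
              have hunea : ¬ u = a := fun h => hpac (by rw [h, hvc])
              have hu3 : u.val ≠ a.val := fun h => hunea (Fin.ext h)
              rw [hvc, Equiv.swap_apply_right]
              constructor <;> omega
            · rw [Equiv.swap_apply_of_ne_of_ne hva hvc]
              constructor <;> omega
    refine ⟨Fin.lt_def.2 key.1, ?_, key.2, Iff.rfl⟩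
    intro h
    rw [Prod.mk.injEq] at h
    have h1' : Equiv.swap a c (Equiv.swap a c u) = Equiv.swap a c a := congrArg _ h.1
    have h2' : Equiv.swap a c (Equiv.swap a c v) = Equiv.swap a c c := congrArg _ h.2
    rw [Equiv.swap_apply_self, Equiv.swap_apply_left] at h1'
    rw [Equiv.swap_apply_self, Equiv.swap_apply_right] at h2'
    rw [Fin.ext_iff] at h1' h2'
    omega

lemma iota_iota (ha : a.val + 1 = j.val) (hc : j.val + 1 = c.val) (p : Fin n × Fin n) :
    iota a c j (iota a c j p) = p := by
  have haj : a ≠ j := fun h => by rw [Fin.ext_iff] at h; omega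
  have hcj : c ≠ j := fun h => by rw [Fin.ext_iff] at h; omega
  have hswapj : Equiv.swap a c j = j :=
    Equiv.swap_apply_of_ne_of_ne (Ne.symm haj) (Ne.symm hcj)
  by_cases hb : p.1 = j ∨ p.2 = j
  · have hinner : iota a c j p = p := by rw [iota, if_pos hb]
    rw [hinner, hinner]
  · have hinner : iota a c j p = (Equiv.swap a c p.1, Equiv.swap a c p.2) := by
      rw [iota, if_neg hb]
    rw [hinner]
    rw [show iota a c j (Equiv.swap a c p.1, Equiv.swap a c p.2) =
      if (Equiv.swap a c p.1, Equiv.swap a c p.2).1 = j ∨ (Equiv.swap a c p.1, Equiv.swap a c p.2).2 = j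
      then (Equiv.swap a c p.1, Equiv.swap a c p.2)
      else (Equiv.swap a c (Equiv.swap a c p.1, Equiv.swap a c p.2).1,
            Equiv.swap a c (Equiv.swap a c p.1, Equiv.swap a c p.2).2) from rfl]
    have hb' : ¬((Equiv.swap a c p.1, Equiv.swap a c p.2).1 = j ∨
        (Equiv.swap a c p.1, Equiv.swap a c p.2).2 = j) := by
      dsimp only
      push_neg at hb ⊢
      constructor
      · intro h
        exact hb.1 (by simpa [hswapj] using congrArg (Equiv.swap a c) h)
      · intro h
        exact hb.2 (by simpa [hswapj] using congrArg (Equiv.swap a c) h)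
    rw [if_neg hb']
    simp [Equiv.swap_apply_self]

lemma mem_pairsF {p : Fin n × Fin n} : p ∈ pairsF n ↔ p.1 < p.2 := by
  simp [pairsF]

lemma swap_peak_vals (ha : a.val + 1 = j.val) (hc : j.val + 1 = c.val)
    (h1 : σ a < σ j) (h2 : σ c < σ j) :
    (σ * Equiv.swap a c) a = σ c ∧ (σ * Equiv.swap a c) c = σ a ∧
      (σ * Equiv.swap a c) j = σ j := by
  have hja : j ≠ a := fun h => by rw [Fin.ext_iff] at h; omega
  have hjc : j ≠ c := fun h => by rw [Fin.ext_iff] at h; omega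
  refine ⟨?_, ?_, ?_⟩
  · rw [Equiv.Perm.mul_apply, Equiv.swap_apply_left]
  · rw [Equiv.Perm.mul_apply, Equiv.swap_apply_right]
  · rw [Equiv.Perm.mul_apply, Equiv.swap_apply_of_ne_of_ne hja hjc]

lemma card_Dset (ha : a.val + 1 = j.val) (hc : j.val + 1 = c.val)
    (h1 : σ a < σ j) (h2 : σ c < σ j) :
    ((pairsF n).filter fun p => (σ * Equiv.swap a c) p.2 < (σ * Equiv.swap a c) p.1 ∧
        p ≠ (a, c)).card =
      ((pairsF n).filter fun p => σ p.2 < σ p.1 ∧ p ≠ (a, c)).card := by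
  have hkey : σ * Equiv.swap a c * Equiv.swap a c = σ := by
    rw [mul_assoc, Equiv.swap_mul_self, mul_one]
  have hvals := swap_peak_vals ha hc h1 h2
  have h1' : (σ * Equiv.swap a c) a < (σ * Equiv.swap a c) j := by
    rw [hvals.1, hvals.2.2]; exact h2
  have h2' : (σ * Equiv.swap a c) c < (σ * Equiv.swap a c) j := by
    rw [hvals.2.1, hvals.2.2]; exact h1
  refine Finset.card_bij' (fun p _ => iota a c j p) (fun p _ => iota a c j p) ?_ ?_ ?_ ?_
  · intro p hp
    rw [Finset.mem_filter] at hp ⊢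
    obtain ⟨hmem, hcond, hne⟩ := hp
    obtain ⟨hs, hne', hpar, hiff⟩ := iota_spec ha hc h1 h2 p (mem_pairsF.1 hmem) hne
    exact ⟨mem_pairsF.2 hs, hiff.1 hcond, hne'⟩
  · intro p hp
    rw [Finset.mem_filter] at hp ⊢
    obtain ⟨hmem, hcond, hne⟩ := hp
    obtain ⟨hs, hne', hpar, hiff⟩ :=
      iota_spec (σ := σ * Equiv.swap a c) ha hc h1' h2' p (mem_pairsF.1 hmem) hne
    rw [hkey] at hiff
    exact ⟨mem_pairsF.2 hs, hiff.1 hcond, hne'⟩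
  · intro p _; exact iota_iota ha hc p
  · intro p _; exact iota_iota ha hc p

lemma card_Oset (ha : a.val + 1 = j.val) (hc : j.val + 1 = c.val)
    (h1 : σ a < σ j) (h2 : σ c < σ j) :
    oinvA (σ * Equiv.swap a c) = oinvA σ := by
  have hkey : σ * Equiv.swap a c * Equiv.swap a c = σ := by
    rw [mul_assoc, Equiv.swap_mul_self, mul_one]
  have hvals := swap_peak_vals ha hc h1 h2
  have h1' : (σ * Equiv.swap a c) a < (σ * Equiv.swap a c) j := by
    rw [hvals.1, hvals.2.2]; exact h2
  have h2' : (σ * Equiv.swap a c) c < (σ * Equiv.swap a c) j := by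
    rw [hvals.2.1, hvals.2.2]; exact h1
  unfold oinvA
  refine Finset.card_bij' (fun p _ => iota a c j p) (fun p _ => iota a c j p) ?_ ?_ ?_ ?_
  · intro p hp
    rw [Finset.mem_filter] at hp ⊢
    obtain ⟨hmem, hcond, hpar0⟩ := hp
    have hne : p ≠ (a, c) := by
      intro h; rw [h] at hpar0; simp only at hpar0; omega
    obtain ⟨hs, hne', hpar, hiff⟩ := iota_spec ha hc h1 h2 p (mem_pairsF.1 hmem) hne
    refine ⟨mem_pairsF.2 hs, hiff.1 hcond, ?_⟩
    omega
  · intro p hp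
    rw [Finset.mem_filter] at hp ⊢
    obtain ⟨hmem, hcond, hpar0⟩ := hp
    have hne : p ≠ (a, c) := by
      intro h; rw [h] at hpar0; simp only at hpar0; omega
    obtain ⟨hs, hne', hpar, hiff⟩ :=
      iota_spec (σ := σ * Equiv.swap a c) ha hc h1' h2' p (mem_pairsF.1 hmem) hne
    rw [hkey] at hiff
    refine ⟨mem_pairsF.2 hs, hiff.1 hcond, ?_⟩
    omega
  · intro p _; exact iota_iota ha hc p
  · intro p _; exact iota_iota ha hc p

lemma invA_split (ha : a.val + 1 = j.val) (hc : j.val + 1 = c.val)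
    (σ'' : Equiv.Perm (Fin n)) :
    invA σ'' = ((pairsF n).filter fun p => σ'' p.2 < σ'' p.1 ∧ p ≠ (a, c)).card +
      (if σ'' c < σ'' a then 1 else 0) := by
  classical
  unfold invA
  have hsplit := Finset.card_filter_add_card_filter_not
    (s := (pairsF n).filter fun p => σ'' p.2 < σ'' p.1) (p := fun p => p ≠ (a, c))
  rw [Finset.filter_filter, Finset.filter_filter] at hsplit
  have heq : ((pairsF n).filter fun p => σ'' p.2 < σ'' p.1 ∧ ¬p ≠ (a, c)) =
      if σ'' c < σ'' a then {(a, c)} else ∅ := by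
    ext q
    rw [Finset.mem_filter, mem_pairsF]
    constructor
    · rintro ⟨hq1, hq2, hq3⟩
      rw [not_not] at hq3
      subst hq3
      simp only at hq2
      rw [if_pos hq2]
      exact Finset.mem_singleton_self _
    · intro hq
      by_cases hlt : σ'' c < σ'' a
      · rw [if_pos hlt] at hq
        rw [Finset.mem_singleton] at hq
        subst hq
        refine ⟨Fin.lt_def.2 ?_, hlt, not_not.2 rfl⟩
        dsimp only
        omega
      · rw [if_neg hlt] at hq
        exact absurd hq (Finset.notMem_empty _)
  rw [heq] at hsplit
  by_cases hlt : σ'' c < σ'' a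
  · rw [if_pos hlt] at hsplit ⊢
    simp only [Finset.card_singleton] at hsplit
    omega
  · rw [if_neg hlt] at hsplit ⊢
    simp only [Finset.card_empty] at hsplit
    omega

lemma invA_parity (ha : a.val + 1 = j.val) (hc : j.val + 1 = c.val)
    (h1 : σ a < σ j) (h2 : σ c < σ j) :
    Odd (invA (σ * Equiv.swap a c) + invA σ) := by
  have hvals := swap_peak_vals ha hc h1 h2
  rw [invA_split ha hc (σ * Equiv.swap a c), invA_split ha hc σ, card_Dset ha hc h1 h2]
  rw [hvals.1, hvals.2.1]
  have hne : σ a ≠ σ c := fun h => by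
    have := σ.injective h
    rw [Fin.ext_iff] at this; omega
  rcases lt_or_gt_of_ne hne with hlt | hlt
  · rw [if_pos hlt, if_neg (lt_asymm hlt)]
    exact ⟨_, by ring⟩
  · rw [if_neg (lt_asymm hlt), if_pos hlt]
    exact ⟨_, by ring⟩

lemma peak_transfer (ha : a.val + 1 = j.val) (hc : j.val + 1 = c.val)
    (h1 : σ a < σ j) (h2 : σ c < σ j)
    (hmax : ∀ m, isPeakAt σ m → σ m ≤ σ j) :
    ∀ m, isPeakAt (σ * Equiv.swap a c) m → (σ * Equiv.swap a c) m ≤ σ j := by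
  have vne : ∀ x y : Fin n, x.val ≠ y.val → x ≠ y :=
    fun x y h hxy => h (congrArg Fin.val hxy)
  have hσ' : ∀ x : Fin n, x ≠ a → x ≠ c → (σ * Equiv.swap a c) x = σ x :=
    fun x hxa hxc => by rw [Equiv.Perm.mul_apply, Equiv.swap_apply_of_ne_of_ne hxa hxc]
  have hvA : (σ * Equiv.swap a c) a = σ c := by
    rw [Equiv.Perm.mul_apply, Equiv.swap_apply_left]
  have hvC : (σ * Equiv.swap a c) c = σ a := by
    rw [Equiv.Perm.mul_apply, Equiv.swap_apply_right]
  have hvJ : (σ * Equiv.swap a c) j = σ j :=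
    hσ' j (vne _ _ (by omega)) (vne _ _ (by omega))
  intro m hm
  obtain ⟨hm0, hm1, hmL, hmR⟩ := hm
  have hsubv : (fsub1 m).val = m.val - 1 := fsub1_val m
  have haddv : (fadd1 m).val = m.val + 1 := fadd1_val hm1
  have hcase : m.val = j.val ∨ m.val + 1 = j.val ∨ m.val = j.val + 1 ∨
      m.val + 2 = j.val ∨ m.val = j.val + 2 ∨ m.val + 2 < j.val ∨ j.val + 2 < m.val := by
    omega
  rcases hcase with hmj | hmj | hmj | hmj | hmj | hmj | hmj
  · have : m = j := Fin.ext hmj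
    rw [this, hvJ]
  · -- m = a : contradiction
    have hma : m = a := Fin.ext (by omega)
    have hfj : fadd1 m = j := Fin.ext (by omega)
    rw [hfj, hma, hvJ, hvA] at hmR
    exact absurd h2 (lt_asymm hmR)
  · -- m = c : contradiction
    have hmc : m = c := Fin.ext (by omega)
    have hfj : fsub1 m = j := Fin.ext (by omega)
    rw [hfj, hmc, hvJ, hvC] at hmL
    exact absurd h1 (lt_asymm hmL)
  · -- m.val + 2 = j.val
    have hmna : m ≠ a := vne _ _ (by omega)
    have hmnc : m ≠ c := vne _ _ (by omega)
    have hfa : fadd1 m = a := Fin.ext (by omega)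
    have hsm : (σ * Equiv.swap a c) m = σ m := hσ' m hmna hmnc
    have hsubna : fsub1 m ≠ a := vne _ _ (by omega)
    have hsubnc : fsub1 m ≠ c := vne _ _ (by omega)
    rw [hsm] at hmR hmL ⊢
    rw [hσ' _ hsubna hsubnc] at hmL
    rw [hfa, hvA] at hmR
    have hanem : σ a ≠ σ m := fun h => hmna (σ.injective h).symm
    rcases lt_or_gt_of_ne hanem with hlt | hlt
    · exact hmax m ⟨hm0, hm1, hmL, by rw [hfa]; exact hlt⟩
    · exact le_of_lt (lt_trans hlt h1)
  · -- m.val = j.val + 2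
    have hmna : m ≠ a := vne _ _ (by omega)
    have hmnc : m ≠ c := vne _ _ (by omega)
    have hfc : fsub1 m = c := Fin.ext (by omega)
    have hsm : (σ * Equiv.swap a c) m = σ m := hσ' m hmna hmnc
    have haddna : fadd1 m ≠ a := vne _ _ (by omega)
    have haddnc : fadd1 m ≠ c := vne _ _ (by omega)
    rw [hsm] at hmR hmL ⊢
    rw [hσ' _ haddna haddnc] at hmR
    rw [hfc, hvC] at hmL
    have hcnem : σ c ≠ σ m := fun h => hmnc (σ.injective h).symm
    rcases lt_or_gt_of_ne hcnem with hlt | hlt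
    · exact hmax m ⟨hm0, hm1, by rw [hfc]; exact hlt, hmR⟩
    · exact le_of_lt (lt_trans hlt h2)
  · -- far below
    have hmna : m ≠ a := vne _ _ (by omega)
    have hmnc : m ≠ c := vne _ _ (by omega)
    have hsm : (σ * Equiv.swap a c) m = σ m := hσ' m hmna hmnc
    rw [hsm] at hmR hmL ⊢
    rw [hσ' _ (vne _ _ (by omega)) (vne _ _ (by omega))] at hmL
    rw [hσ' _ (vne _ _ (by omega)) (vne _ _ (by omega))] at hmR
    exact hmax m ⟨hm0, hm1, hmL, hmR⟩
  · -- far above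
    have hmna : m ≠ a := vne _ _ (by omega)
    have hmnc : m ≠ c := vne _ _ (by omega)
    have hsm : (σ * Equiv.swap a c) m = σ m := hσ' m hmna hmnc
    rw [hsm] at hmR hmL ⊢
    rw [hσ' _ (vne _ _ (by omega)) (vne _ _ (by omega))] at hmL
    rw [hσ' _ (vne _ _ (by omega)) (vne _ _ (by omega))] at hmR
    exact hmax m ⟨hm0, hm1, hmL, hmR⟩

lemma chess_swap (hch : ChessboardA σ) (hpar : a.val % 2 = c.val % 2) :
    ChessboardA (σ * Equiv.swap a c) := by
  have key : ∀ i : Fin n, ((Equiv.swap a c) i).val % 2 = i.val % 2 := by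
    intro i
    rcases eq_or_ne i a with rfl | hia
    · rw [Equiv.swap_apply_left]; omega
    · rcases eq_or_ne i c with rfl | hic
      · rw [Equiv.swap_apply_right]; omega
      · rw [Equiv.swap_apply_of_ne_of_ne hia hic]
  rcases hch with h | h
  · left
    intro i
    rw [Equiv.Perm.mul_apply, h, key]
  · right
    intro i
    have h1 := h (Equiv.swap a c i)
    have h2 := key i
    rw [Equiv.Perm.mul_apply, h1]
    omega

end Master

lemma neg_one_pow_eq_neg {R : Type*} [CommRing R] {m m' : ℕ} (h : Odd (m + m')) :
    (-1 : R) ^ m = -(-1 : R) ^ m' := by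
  have h1 : (-1 : R) ^ m * (-1) ^ m' = -1 := by
    rw [← pow_add]; exact Odd.neg_one_pow h
  have h2 : (-1 : R) ^ m' * (-1) ^ m' = 1 := by
    rw [← pow_add]; exact Even.neg_one_pow ⟨m', rfl⟩
  calc (-1 : R) ^ m = (-1) ^ m * ((-1) ^ m' * (-1) ^ m') := by rw [h2, mul_one]
    _ = ((-1) ^ m * (-1) ^ m') * (-1) ^ m' := by ring
    _ = -(-1) ^ m' := by rw [h1]; ring

def peaksF (σ : Equiv.Perm (Fin n)) : Finset (Fin n) := univ.filter (isPeakAt σ)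

def topP (σ : Equiv.Perm (Fin n)) (h : (peaksF σ).Nonempty) : Fin n :=
  σ.symm (((peaksF σ).image σ).max' (h.image σ))

lemma topP_isPeak (σ : Equiv.Perm (Fin n)) (h : (peaksF σ).Nonempty) :
    isPeakAt σ (topP σ h) := by
  have hmem := Finset.max'_mem ((peaksF σ).image σ) (h.image σ)
  rw [Finset.mem_image] at hmem
  obtain ⟨j', hj', hval⟩ := hmem
  have he : topP σ h = j' := by rw [topP, ← hval, Equiv.symm_apply_apply]
  rw [he]
  exact (Finset.mem_filter.1 hj').2

lemma topP_max (σ : Equiv.Perm (Fin n)) (h : (peaksF σ).Nonempty) :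
    ∀ m, isPeakAt σ m → σ m ≤ σ (topP σ h) := by
  intro m hm
  rw [topP, Equiv.apply_symm_apply]
  exact Finset.le_max' _ _
    (Finset.mem_image.2 ⟨m, Finset.mem_filter.2 ⟨Finset.mem_univ _, hm⟩, rfl⟩)

def phi (σ : Equiv.Perm (Fin n)) : Equiv.Perm (Fin n) :=
  if h : (peaksF σ).Nonempty then
    σ * Equiv.swap (fsub1 (topP σ h)) (fadd1 (topP σ h))
  else σ

lemma phi_eq (σ : Equiv.Perm (Fin n)) (h : (peaksF σ).Nonempty) :
    phi σ = σ * Equiv.swap (fsub1 (topP σ h)) (fadd1 (topP σ h)) := dif_pos h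

section PhiFacts

variable (σ : Equiv.Perm (Fin n)) (h : (peaksF σ).Nonempty)
include h

lemma topP_vals :
    (fsub1 (topP σ h)).val + 1 = (topP σ h).val ∧
      (topP σ h).val + 1 = (fadd1 (topP σ h)).val := by
  have hj := topP_isPeak σ h
  constructor
  · have h0 := hj.1
    rw [fsub1_val]; omega
  · rw [fadd1_val hj.2.1]

lemma phi_isPeak : isPeakAt (phi σ) (topP σ h) := by
  have hj := topP_isPeak σ h
  have hv := topP_vals σ h
  have hvals := swap_peak_vals hv.1 hv.2 hj.2.2.1 hj.2.2.2
  rw [phi_eq σ h]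
  exact ⟨hj.1, hj.2.1, by rw [hvals.1, hvals.2.2]; exact hj.2.2.2,
    by rw [hvals.2.1, hvals.2.2]; exact hj.2.2.1⟩

lemma phi_peaks_nonempty : (peaksF (phi σ)).Nonempty :=
  ⟨topP σ h, Finset.mem_filter.2 ⟨Finset.mem_univ _, phi_isPeak σ h⟩⟩

lemma topP_phi (h' : (peaksF (phi σ)).Nonempty) : topP (phi σ) h' = topP σ h := by
  have hj := topP_isPeak σ h
  have hv := topP_vals σ h
  have hvals := swap_peak_vals hv.1 hv.2 hj.2.2.1 hj.2.2.2
  have hub : ∀ v ∈ (peaksF (phi σ)).image (phi σ), v ≤ σ (topP σ h) := by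
    intro v hvmem
    rw [Finset.mem_image] at hvmem
    obtain ⟨m, hmmem, rfl⟩ := hvmem
    have hpk : isPeakAt (phi σ) m := (Finset.mem_filter.1 hmmem).2
    rw [phi_eq σ h] at hpk ⊢
    exact peak_transfer hv.1 hv.2 hj.2.2.1 hj.2.2.2 (topP_max σ h) m hpk
  have hjv : phi σ (topP σ h) = σ (topP σ h) := by
    rw [phi_eq σ h]; exact hvals.2.2
  have hmem : σ (topP σ h) ∈ (peaksF (phi σ)).image (phi σ) :=
    Finset.mem_image.2 ⟨topP σ h,
      Finset.mem_filter.2 ⟨Finset.mem_univ _, phi_isPeak σ h⟩, hjv⟩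
  have hmax' : ((peaksF (phi σ)).image (phi σ)).max' (h'.image _) = σ (topP σ h) :=
    le_antisymm (Finset.max'_le _ _ _ hub) (Finset.le_max' _ _ hmem)
  rw [topP, hmax', ← hjv, Equiv.symm_apply_apply]

lemma phi_phi_aux : phi (phi σ) = σ := by
  have h' := phi_peaks_nonempty σ h
  have e2 : phi (phi σ) =
      phi σ * Equiv.swap (fsub1 (topP (phi σ) h')) (fadd1 (topP (phi σ) h')) := dif_pos h'
  rw [e2, topP_phi σ h h', phi_eq σ h, mul_assoc, Equiv.swap_mul_self, mul_one]

lemma phi_ne : phi σ ≠ σ := by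
  have hj := topP_isPeak σ h
  have hv := topP_vals σ h
  have hvals := swap_peak_vals hv.1 hv.2 hj.2.2.1 hj.2.2.2
  intro heq
  have happ : phi σ (fsub1 (topP σ h)) = σ (fsub1 (topP σ h)) := by rw [heq]
  rw [phi_eq σ h] at happ
  rw [hvals.1] at happ
  have := σ.injective happ
  rw [Fin.ext_iff] at this
  omega

lemma phi_chess (hch : ChessboardA σ) : ChessboardA (phi σ) := by
  have hv := topP_vals σ h
  rw [phi_eq σ h]
  exact chess_swap hch (by omega)

lemma phi_oinv : oinvA (phi σ) = oinvA σ := by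
  have hj := topP_isPeak σ h
  have hv := topP_vals σ h
  rw [phi_eq σ h]
  exact card_Oset hv.1 hv.2 hj.2.2.1 hj.2.2.2

lemma phi_inv_odd : Odd (invA (phi σ) + invA σ) := by
  have hj := topP_isPeak σ h
  have hv := topP_vals σ h
  rw [phi_eq σ h]
  exact invA_parity hv.1 hv.2 hj.2.2.1 hj.2.2.2

end PhiFacts

lemma hasPeak_nonempty {σ : Equiv.Perm (Fin n)} (h : HasPeak σ) : (peaksF σ).Nonempty := by
  obtain ⟨j, hj⟩ := (hasPeak_iff σ).1 h
  exact ⟨j, Finset.mem_filter.2 ⟨Finset.mem_univ _, hj⟩⟩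

lemma phi_hasPeak (σ : Equiv.Perm (Fin n)) (h : (peaksF σ).Nonempty) : HasPeak (phi σ) :=
  (hasPeak_iff _).2 ⟨topP σ h, phi_isPeak σ h⟩

end CBAux

theorem signed_oinv_chessboard_eq_unimodal_chessboard (n : ℕ) (hn : 0 < n)
    (R : Type*) [CommRing R] (x : R) :
    ∑ σ ∈ univ.filter (fun σ : Equiv.Perm (Fin n) => ChessboardA σ),
        (-1 : R) ^ invA σ * x ^ oinvA σ =
      ∑ σ ∈ univ.filter (fun σ : Equiv.Perm (Fin n) => ChessboardA σ ∧ UnimodalA σ),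
        (-1 : R) ^ invA σ * x ^ oinvA σ := by
  classical
  have hsplit := Finset.sum_filter_add_sum_filter_not
    (univ.filter fun σ : Equiv.Perm (Fin n) => ChessboardA σ)
    (fun σ => UnimodalA σ) (fun σ => (-1 : R) ^ invA σ * x ^ oinvA σ)
  rw [Finset.filter_filter, Finset.filter_filter] at hsplit
  have hzero : ∑ σ ∈ univ.filter
      (fun σ : Equiv.Perm (Fin n) => ChessboardA σ ∧ ¬ UnimodalA σ),
      ((-1 : R) ^ invA σ * x ^ oinvA σ) = 0 := by
    apply Finset.sum_involution (g := fun σ _ => CBAux.phi σ)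
    · intro σ hσ
      have hσ' := Finset.mem_filter.1 hσ
      have hpk : HasPeak σ := not_not.1 hσ'.2.2
      have h := CBAux.hasPeak_nonempty hpk
      have hsign : (-1 : R) ^ invA (CBAux.phi σ) = -(-1 : R) ^ invA σ :=
        CBAux.neg_one_pow_eq_neg (CBAux.phi_inv_odd σ h)
      rw [CBAux.phi_oinv σ h, hsign]
      ring
    · intro σ hσ _
      have hσ' := Finset.mem_filter.1 hσ
      have hpk : HasPeak σ := not_not.1 hσ'.2.2
      exact CBAux.phi_ne σ (CBAux.hasPeak_nonempty hpk)
    · intro σ hσ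
      have hσ' := Finset.mem_filter.1 hσ
      have hpk : HasPeak σ := not_not.1 hσ'.2.2
      have h := CBAux.hasPeak_nonempty hpk
      refine Finset.mem_filter.2 ⟨Finset.mem_univ _, CBAux.phi_chess σ h hσ'.2.1, ?_⟩
      exact not_not.2 (CBAux.phi_hasPeak σ h)
    · intro σ hσ
      have hσ' := Finset.mem_filter.1 hσ
      have hpk : HasPeak σ := not_not.1 hσ'.2.2
      exact CBAux.phi_phi_aux σ (CBAux.hasPeak_nonempty hpk)
  rw [← hsplit, hzero, add_zero]
end

section
/- Let n ≥ 2 and σ ∈ B_{n−1}, and define σ̃ ∈ B_n by σ̃ = [σ(1),…,σ(n−1), −n]. Then, with δ = 1 if n is even and 0 if n is odd: oneg(σ̃) = oneg(σ) + 1 − δ, eneg(σ̃) = eneg(σ) + δ, oinv(σ̃) = oinv(σ) + ⌈(n−1)/2⌉, einv(σ̃) = einv(σ) + ⌊(n−1)/2⌋, onsp(σ̃) = onsp(σ) + ⌈(n−1)/2⌉, and ensp(σ̃) = ensp(σ) + ⌊(n−1)/2⌋. -/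
open Finset

lemma wval_bound {m : ℕ} (σ : BG m) (i : Fin m) : -(m:ℤ) ≤ wval σ i ∧ wval σ i ≤ m := by
  have h : (σ.1 i : ℤ) < m := by exact_mod_cast (σ.1 i).is_lt
  unfold wval; split_ifs <;> constructor <;> omega

lemma count_parity (m : ℕ) :
    (((range m).filter fun i => (m - i) % 2 = 1).card = (m+1)/2) ∧
    (((range m).filter fun i => (m - i) % 2 = 0).card = m/2) := by
  induction m with
  | zero => simp
  | succ m ih =>
    rw [Finset.range_add_one, filter_insert, filter_insert]
    have h1 : ((range m).filter fun i => (m+1 - i) % 2 = 1)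
        = (range m).filter fun i => (m - i) % 2 = 0 := by
      apply filter_congr; intro i hi; simp only [mem_range] at hi
      omega
    have h0 : ((range m).filter fun i => (m+1 - i) % 2 = 0)
        = (range m).filter fun i => (m - i) % 2 = 1 := by
      apply filter_congr; intro i hi; simp only [mem_range] at hi
      omega
    have hm : m ∉ (range m).filter fun i => (m - i) % 2 = 0 := by simp
    simp only [Nat.add_sub_cancel_left] at *
    rw [if_pos (by norm_num), if_neg (by norm_num), h1, h0, card_insert_of_notMem hm,
      ih.1, ih.2]
    omega

lemma pair_split (m : ℕ) (σ : BG m) (τ : BG (m+1))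
    (hw : ∀ i : Fin m, wval τ i.castSucc = wval σ i)
    (C : ℤ → ℤ → Prop) [inst : ∀ a b, Decidable (C a b)]
    (hC : ∀ i : Fin m, C (wval σ i) (wval τ (Fin.last m))) (r : ℕ) :
    ((pairsF (m+1)).filter fun p => C (wval τ p.1) (wval τ p.2) ∧ (p.2.val - p.1.val) % 2 = r).card
    = ((pairsF m).filter fun p => C (wval σ p.1) (wval σ p.2) ∧ (p.2.val - p.1.val) % 2 = r).card
    + ((range m).filter fun i => (m - i) % 2 = r).card := by
  have key : ∀ (n : ℕ) (ρ : BG n),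
      ((pairsF n).filter fun p => C (wval ρ p.1) (wval ρ p.2) ∧ (p.2.val - p.1.val) % 2 = r).card
      = ∑ i : Fin n, ∑ j : Fin n,
          if i < j ∧ C (wval ρ i) (wval ρ j) ∧ (j.val - i.val) % 2 = r then 1 else 0 := by
    intro n ρ
    rw [pairsF, filter_filter, card_filter, Fintype.sum_prod_type]
  rw [key, key]
  rw [Fin.sum_univ_castSucc]
  have hlastrow : (∑ j : Fin (m+1),
      if Fin.last m < j ∧ C (wval τ (Fin.last m)) (wval τ j) ∧ (j.val - (Fin.last m).val) % 2 = r then 1 else 0) = 0 := by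
    apply Finset.sum_eq_zero; intro j _
    rw [if_neg]; rintro ⟨hj, -⟩; exact absurd hj (not_lt.mpr (Fin.le_last j))
  rw [hlastrow, add_zero]
  have hrow : ∀ i : Fin m, (∑ j : Fin (m+1),
      if i.castSucc < j ∧ C (wval τ i.castSucc) (wval τ j) ∧ (j.val - i.castSucc.val) % 2 = r then 1 else 0)
      = (∑ j : Fin m, if i < j ∧ C (wval σ i) (wval σ j) ∧ (j.val - i.val) % 2 = r then 1 else 0)
        + (if (m - i.val) % 2 = r then 1 else 0) := by
    intro i
    rw [Fin.sum_univ_castSucc]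
    congr 1
    · apply Finset.sum_congr rfl; intro j _
      congr 1
      simp only [hw, Fin.castSucc_lt_castSucc_iff, Fin.coe_castSucc, eq_iff_iff]
    · have h1 : i.castSucc < Fin.last m := Fin.castSucc_lt_last i
      have h2 : C (wval τ i.castSucc) (wval τ (Fin.last m)) := by rw [hw]; exact hC i
      simp only [h1, h2, true_and, Fin.val_last, Fin.coe_castSucc]
  rw [Finset.sum_congr rfl (fun i _ => hrow i), Finset.sum_add_distrib]
  congr 1
  rw [Fin.sum_univ_eq_sum_range (fun i => if (m - i) % 2 = r then 1 else 0), card_filter]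

/-- Lemma 3.1: appending `-n` to a signed permutation of `[n-1]`.  Here `n = m+1`,
`σ ∈ B_m` and `τ = σ̃ = [σ(1), …, σ(m), -(m+1)] ∈ B_{m+1}`. -/
theorem stats_append_neg_last (m : ℕ) (hm : 1 ≤ m) (σ : BG m) (τ : BG (m + 1))
    (hw : ∀ i : Fin m, wval τ i.castSucc = wval σ i)
    (hlast : wval τ (Fin.last m) = -((m : ℤ) + 1)) :
    onegB τ = onegB σ + 1 - (if (m + 1) % 2 = 0 then 1 else 0) ∧
    enegB τ = enegB σ + (if (m + 1) % 2 = 0 then 1 else 0) ∧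
    oinvB τ = oinvB σ + (m + 1) / 2 ∧
    einvB τ = einvB σ + m / 2 ∧
    onspB τ = onspB σ + (m + 1) / 2 ∧
    enspB τ = enspB σ + m / 2 := by
  have hCinv : ∀ i : Fin m, wval τ (Fin.last m) < wval σ i := by
    intro i; have := wval_bound σ i; rw [hlast]; omega
  have hCnsp : ∀ i : Fin m, wval σ i + wval τ (Fin.last m) < 0 := by
    intro i; have := wval_bound σ i; rw [hlast]; omega
  have negsplit : ∀ r : ℕ,
      (univ.filter fun i : Fin (m+1) => wval τ i < 0 ∧ (i.val + 1) % 2 = r).card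
      = (univ.filter fun i : Fin m => wval σ i < 0 ∧ (i.val + 1) % 2 = r).card
        + (if (m + 1) % 2 = r then 1 else 0) := by
    intro r
    rw [card_filter, card_filter, Fin.sum_univ_castSucc]
    congr 1
    · apply Finset.sum_congr rfl; intro i _
      congr 1
      simp only [hw, Fin.coe_castSucc]
    · have hneg : wval τ (Fin.last m) < 0 := by rw [hlast]; omega
      simp only [Fin.val_last, hneg, true_and]
  refine ⟨?_, ?_, ?_, ?_, ?_, ?_⟩
  · have h := negsplit 1
    simp only [onegB] at h ⊢
    rw [h]
    rcases Nat.mod_two_eq_zero_or_one (m+1) with hp | hp <;> simp [hp] <;> omega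
  · have h := negsplit 0
    simp only [enegB] at h ⊢
    rw [h]
  · have h := pair_split m σ τ hw (fun a b => b < a) hCinv 1
    rw [(count_parity m).1] at h
    exact h
  · have h := pair_split m σ τ hw (fun a b => b < a) hCinv 0
    rw [(count_parity m).2] at h
    exact h
  · have h := pair_split m σ τ hw (fun a b => a + b < 0) hCnsp 1
    rw [(count_parity m).1] at h
    exact h
  · have h := pair_split m σ τ hw (fun a b => a + b < 0) hCnsp 0
    rw [(count_parity m).2] at h
    exact h
end

section
/- Let n ≥ 2 and σ ∈ B_{n−1}, and define σ̂ ∈ B_n by σ̂ = [n, σ(1),…,σ(n−1)]. Then oneg(σ̂) = eneg(σ), eneg(σ̂) = oneg(σ), oinv(σ̂) = oinv(σ) + ⌈(n−1)/2⌉, einv(σ̂) = einv(σ) + ⌊(n−1)/2⌋, onsp(σ̂) = onsp(σ), and ensp(σ̂) = ensp(σ). -/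
open Finset

lemma count_even (m : ℕ) : ((Finset.range m).filter (fun j => j % 2 = 0)).card = (m + 1) / 2 := by
  induction m with
  | zero => simp
  | succ k ih =>
    rw [Finset.range_add_one, Finset.filter_insert]
    by_cases h : k % 2 = 0
    · rw [if_pos h, Finset.card_insert_of_notMem (by simp), ih]; omega
    · rw [if_neg h, ih]; omega

lemma count_odd (m : ℕ) : ((Finset.range m).filter (fun j => j % 2 = 1)).card = m / 2 := by
  induction m with
  | zero => simp
  | succ k ih =>
    rw [Finset.range_add_one, Finset.filter_insert]
    by_cases h : k % 2 = 1
    · rw [if_pos h, Finset.card_insert_of_notMem (by simp), ih]; omega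
    · rw [if_neg h, ih]; omega

lemma card_filter_fin (m : ℕ) (p : ℕ → Prop) [DecidablePred p] :
    (Finset.univ.filter (fun j : Fin m => p j.val)).card = ((Finset.range m).filter p).card := by
  rw [Finset.card_filter, Finset.card_filter,
    ← Fin.sum_univ_eq_sum_range (fun k => if p k then 1 else 0) m]

lemma mem_pairsF {n : ℕ} {p : Fin n × Fin n} : p ∈ pairsF n ↔ p.1 < p.2 := by
  simp [pairsF]

lemma split_card (m : ℕ) (P : Fin (m + 1) × Fin (m + 1) → Prop) [DecidablePred P] :
    ((pairsF (m + 1)).filter P).card =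
      (Finset.univ.filter (fun j : Fin m => P (0, j.succ))).card +
      ((pairsF m).filter (fun p => P (p.1.succ, p.2.succ))).card := by
  have h := Finset.card_filter_add_card_filter_not
    (s := (pairsF (m + 1)).filter P) (p := fun q => q.1 = 0)
  rw [Finset.filter_filter, Finset.filter_filter] at h
  have h1 : ((pairsF (m + 1)).filter (fun q => P q ∧ q.1 = 0)).card =
      (Finset.univ.filter (fun j : Fin m => P (0, j.succ))).card := by
    symm
    apply Finset.card_bij (fun j _ => ((0 : Fin (m + 1)), j.succ))
    · intro j hj
      rw [Finset.mem_filter] at hj ⊢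
      exact ⟨mem_pairsF.mpr (Fin.succ_pos j), hj.2, rfl⟩
    · intro a _ b _ hab
      exact Fin.succ_injective _ (congrArg Prod.snd hab)
    · intro q hq
      rw [Finset.mem_filter] at hq
      obtain ⟨hp, hP, h0⟩ := hq
      have hne : q.2 ≠ 0 := by
        intro h2; rw [mem_pairsF, h0, h2] at hp; exact lt_irrefl _ hp
      obtain ⟨j, hj⟩ := Fin.exists_succ_eq.mpr hne
      refine ⟨j, ?_, ?_⟩
      · rw [Finset.mem_filter]
        refine ⟨Finset.mem_univ _, ?_⟩
        rw [hj, ← h0]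
        exact hP
      · rw [hj, ← h0]
  have h2 : ((pairsF (m + 1)).filter (fun q => P q ∧ ¬ q.1 = 0)).card =
      ((pairsF m).filter (fun p => P (p.1.succ, p.2.succ))).card := by
    symm
    apply Finset.card_bij (fun p _ => (p.1.succ, p.2.succ))
    · intro p hp
      rw [Finset.mem_filter] at hp ⊢
      exact ⟨mem_pairsF.mpr (Fin.succ_lt_succ_iff.mpr (mem_pairsF.mp hp.1)), hp.2,
        Fin.succ_ne_zero _⟩
    · intro a _ b _ hab
      exact Prod.ext (Fin.succ_injective _ (congrArg Prod.fst hab))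
        (Fin.succ_injective _ (congrArg Prod.snd hab))
    · intro q hq
      rw [Finset.mem_filter] at hq
      obtain ⟨hp, hP, h0⟩ := hq
      obtain ⟨i, hi⟩ := Fin.exists_succ_eq.mpr h0
      have hne2 : q.2 ≠ 0 := by
        intro h2
        have hlt := mem_pairsF.mp hp
        rw [h2] at hlt
        exact absurd hlt (Fin.not_lt_zero _)
      obtain ⟨j, hj⟩ := Fin.exists_succ_eq.mpr hne2
      refine ⟨(i, j), ?_, ?_⟩
      · rw [Finset.mem_filter]
        constructor
        · rw [mem_pairsF]
          have hlt := mem_pairsF.mp hp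
          rw [← hi, ← hj] at hlt
          exact Fin.succ_lt_succ_iff.mp hlt
        · show P (i.succ, j.succ)
          rw [hi, hj]
          exact hP
      · show (i.succ, j.succ) = q
        rw [hi, hj]
  rw [← h, h1, h2]

/-- Lemma 3.2: prepending `n` to a signed permutation of `[n-1]`.  Here `n = m+1`,
`σ ∈ B_m` and `τ = σ̂ = [m+1, σ(1), …, σ(m)] ∈ B_{m+1}`. -/
theorem stats_prepend_pos (m : ℕ) (hm : 1 ≤ m) (σ : BG m) (τ : BG (m + 1))
    (hw : ∀ i : Fin m, wval τ i.succ = wval σ i)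
    (hfirst : wval τ 0 = (m : ℤ) + 1) :
    onegB τ = enegB σ ∧
    enegB τ = onegB σ ∧
    oinvB τ = oinvB σ + (m + 1) / 2 ∧
    einvB τ = einvB σ + m / 2 ∧
    onspB τ = onspB σ ∧
    enspB τ = enspB σ := by
  have hb : ∀ j : Fin m, -((m : ℤ)) ≤ wval σ j ∧ wval σ j ≤ (m : ℤ) := by
    intro j
    have h2 : ((σ.1 j : Fin m) : ℤ) < (m : ℤ) := by exact_mod_cast (σ.1 j).isLt
    have h3 : (0 : ℤ) ≤ ((σ.1 j : Fin m) : ℤ) := Int.ofNat_nonneg _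
    rcases hs : σ.2 j with _ | _ <;> simp [wval, hs] <;> omega
  -- oneg
  have goneg : onegB τ = enegB σ := by
    rw [onegB, Finset.card_filter, Fin.sum_univ_succ]
    have hz : ¬ (wval τ 0 < 0 ∧ ((0 : Fin (m+1)).val + 1) % 2 = 1) := by
      rw [hfirst]; intro ⟨h, _⟩; omega
    rw [if_neg hz, zero_add, enegB, Finset.card_filter]
    refine Finset.sum_congr rfl fun i _ => ?_
    simp only [hw, Fin.val_succ]
    have hiff : (wval σ i < 0 ∧ (i.val + 1 + 1) % 2 = 1) ↔
        (wval σ i < 0 ∧ (i.val + 1) % 2 = 0) := by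
      constructor <;> (intro ⟨a, b⟩; exact ⟨a, by omega⟩)
    rw [if_congr hiff rfl rfl]
  have geneg : enegB τ = onegB σ := by
    rw [enegB, Finset.card_filter, Fin.sum_univ_succ]
    have hz : ¬ (wval τ 0 < 0 ∧ ((0 : Fin (m+1)).val + 1) % 2 = 0) := by
      rw [hfirst]; intro ⟨h, _⟩; omega
    rw [if_neg hz, zero_add, onegB, Finset.card_filter]
    refine Finset.sum_congr rfl fun i _ => ?_
    simp only [hw, Fin.val_succ]
    have hiff : (wval σ i < 0 ∧ (i.val + 1 + 1) % 2 = 0) ↔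
        (wval σ i < 0 ∧ (i.val + 1) % 2 = 1) := by
      constructor <;> (intro ⟨a, b⟩; exact ⟨a, by omega⟩)
    rw [if_congr hiff rfl rfl]
  -- oinv
  have goinv : oinvB τ = oinvB σ + (m + 1) / 2 := by
    rw [oinvB, split_card]
    have hA : (Finset.univ.filter (fun j : Fin m =>
        wval τ ((0 : Fin (m+1)), j.succ).2 < wval τ ((0 : Fin (m+1)), j.succ).1 ∧
          (((0 : Fin (m+1)), j.succ).2.val - ((0 : Fin (m+1)), j.succ).1.val) % 2 = 1)).card
        = (m + 1) / 2 := by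
      have hcg : ∀ j ∈ (Finset.univ : Finset (Fin m)),
          ((wval τ ((0 : Fin (m+1)), j.succ).2 < wval τ ((0 : Fin (m+1)), j.succ).1 ∧
          (((0 : Fin (m+1)), j.succ).2.val - ((0 : Fin (m+1)), j.succ).1.val) % 2 = 1)
            ↔ j.val % 2 = 0) := by
        intro j _
        show (wval τ j.succ < wval τ 0 ∧ (j.succ.val - (0 : Fin (m+1)).val) % 2 = 1) ↔ _
        rw [hw, hfirst]
        have := hb j
        simp only [Fin.val_succ, Fin.val_zero]
        constructor
        · intro ⟨_, h⟩; omega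
        · intro h; exact ⟨by omega, by omega⟩
      rw [Finset.filter_congr hcg, card_filter_fin m (fun k => k % 2 = 0), count_even]
    have hB : ((pairsF m).filter (fun p : Fin m × Fin m =>
        wval τ (p.1.succ, p.2.succ).2 < wval τ (p.1.succ, p.2.succ).1 ∧
          ((p.1.succ, p.2.succ).2.val - (p.1.succ, p.2.succ).1.val) % 2 = 1)).card
        = oinvB σ := by
      unfold oinvB
      apply congrArg Finset.card
      apply Finset.filter_congr
      intro p _
      show (wval τ p.2.succ < wval τ p.1.succ ∧ (p.2.succ.val - p.1.succ.val) % 2 = 1) ↔ _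
      rw [hw, hw]
      simp only [Fin.val_succ]
      constructor <;> (intro ⟨a, b⟩; exact ⟨a, by omega⟩)
    rw [hA, hB, add_comm]
  -- einv
  have geinv : einvB τ = einvB σ + m / 2 := by
    rw [einvB, split_card]
    have hA : (Finset.univ.filter (fun j : Fin m =>
        wval τ ((0 : Fin (m+1)), j.succ).2 < wval τ ((0 : Fin (m+1)), j.succ).1 ∧
          (((0 : Fin (m+1)), j.succ).2.val - ((0 : Fin (m+1)), j.succ).1.val) % 2 = 0)).card
        = m / 2 := by
      have hcg : ∀ j ∈ (Finset.univ : Finset (Fin m)),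
          ((wval τ ((0 : Fin (m+1)), j.succ).2 < wval τ ((0 : Fin (m+1)), j.succ).1 ∧
          (((0 : Fin (m+1)), j.succ).2.val - ((0 : Fin (m+1)), j.succ).1.val) % 2 = 0)
            ↔ j.val % 2 = 1) := by
        intro j _
        show (wval τ j.succ < wval τ 0 ∧ (j.succ.val - (0 : Fin (m+1)).val) % 2 = 0) ↔ _
        rw [hw, hfirst]
        have := hb j
        simp only [Fin.val_succ, Fin.val_zero]
        constructor
        · intro ⟨_, h⟩; omega
        · intro h; exact ⟨by omega, by omega⟩
      rw [Finset.filter_congr hcg, card_filter_fin m (fun k => k % 2 = 1), count_odd]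
    have hB : ((pairsF m).filter (fun p : Fin m × Fin m =>
        wval τ (p.1.succ, p.2.succ).2 < wval τ (p.1.succ, p.2.succ).1 ∧
          ((p.1.succ, p.2.succ).2.val - (p.1.succ, p.2.succ).1.val) % 2 = 0)).card
        = einvB σ := by
      unfold einvB
      apply congrArg Finset.card
      apply Finset.filter_congr
      intro p _
      show (wval τ p.2.succ < wval τ p.1.succ ∧ (p.2.succ.val - p.1.succ.val) % 2 = 0) ↔ _
      rw [hw, hw]
      simp only [Fin.val_succ]
      constructor <;> (intro ⟨a, b⟩; exact ⟨a, by omega⟩)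
    rw [hA, hB, add_comm]
  -- onsp
  have gonsp : onspB τ = onspB σ := by
    rw [onspB, split_card]
    have hz : ∀ j ∈ (Finset.univ : Finset (Fin m)),
        ¬ (wval τ ((0 : Fin (m+1)), j.succ).1 + wval τ ((0 : Fin (m+1)), j.succ).2 < 0 ∧
          (((0 : Fin (m+1)), j.succ).2.val - ((0 : Fin (m+1)), j.succ).1.val) % 2 = 1) := by
      intro j _
      show ¬ (wval τ 0 + wval τ j.succ < 0 ∧ _)
      rw [hw, hfirst]
      have := hb j
      intro ⟨h, _⟩; omega
    rw [Finset.filter_false_of_mem hz, Finset.card_empty, zero_add]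
    unfold onspB
    apply congrArg Finset.card
    apply Finset.filter_congr
    intro p _
    show (wval τ p.1.succ + wval τ p.2.succ < 0 ∧ (p.2.succ.val - p.1.succ.val) % 2 = 1) ↔ _
    rw [hw, hw]
    simp only [Fin.val_succ]
    constructor <;> (intro ⟨a, b⟩; exact ⟨a, by omega⟩)
  have gensp : enspB τ = enspB σ := by
    rw [enspB, split_card]
    have hz : ∀ j ∈ (Finset.univ : Finset (Fin m)),
        ¬ (wval τ ((0 : Fin (m+1)), j.succ).1 + wval τ ((0 : Fin (m+1)), j.succ).2 < 0 ∧
          (((0 : Fin (m+1)), j.succ).2.val - ((0 : Fin (m+1)), j.succ).1.val) % 2 = 0) := by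
      intro j _
      show ¬ (wval τ 0 + wval τ j.succ < 0 ∧ _)
      rw [hw, hfirst]
      have := hb j
      intro ⟨h, _⟩; omega
    rw [Finset.filter_false_of_mem hz, Finset.card_empty, zero_add]
    unfold enspB
    apply congrArg Finset.card
    apply Finset.filter_congr
    intro p _
    show (wval τ p.1.succ + wval τ p.2.succ < 0 ∧ (p.2.succ.val - p.1.succ.val) % 2 = 0) ↔ _
    rw [hw, hw]
    simp only [Fin.val_succ]
    constructor <;> (intro ⟨a, b⟩; exact ⟨a, by omega⟩)
  exact ⟨goneg, geneg, goinv, geinv, gonsp, gensp⟩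
end
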